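/- arXiv:1902.10271 — 6 statements merged into one kernel-verified Lean document; each statement's English description precedes it below -/
import Mathlib

section
/- For every 2-SAT formula Φ over variable set V in which each clause has exactly two literals, there exists a 2-SAT formula Φ' over a variable set V' with |V'| at most the total number of literal occurrences in Φ (plus |V|) and with at most |clauses of Φ| plus |V'| clauses, such that: (i) each clause of Φ' has exactly two literals; (ii) each variable of Φ' occurs in at most three clauses, at most twice positively and at most twice negatively; (iii) there is a coordinate-projection map ρ : {0,1}^{V'} → {0,1}^{V} (each variable v ∈ V is mapped to the value of a fixed designated copy of v in V') that restricts to a bijection between the satisfying assignments of Φ' and the satisfying assignments of Φ. Consequently the induced linear projection maps SAT(Φ') onto SAT(Φ). -/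
open Finset

noncomputable section

/-- A 2-SAT formula over variables `V`: a list of clauses, each clause being a pair of
literals, where a literal is a variable together with a sign. -/
structure TwoSAT (V : Type) where
  clauses : List ((V × Bool) × (V × Bool))

/-- A literal `l = (v, s)` is satisfied by the assignment `a` if `a v = s`. -/
def litSat {V : Type} (a : V → Bool) (l : V × Bool) : Prop := a l.1 = l.2

/-- An assignment satisfies the formula if every clause has a satisfied literal. -/
def TwoSAT.Sat {V : Type} (Φ : TwoSAT V) (a : V → Bool) : Prop :=
  ∀ cl ∈ Φ.clauses, litSat a cl.1 ∨ litSat a cl.2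

/-- `SAT(Φ)`: the convex hull of all satisfying assignments, viewed as 0/1 vectors. -/
def SATpoly {V : Type} [Fintype V] (Φ : TwoSAT V) : Set (V → ℝ) :=
  convexHull ℝ {x | ∃ a : V → Bool, Φ.Sat a ∧ x = fun v => if a v then (1 : ℝ) else 0}

/-- Number of occurrences of the variable `v` in the clause `cl`. -/
def varOccIn {V : Type} [DecidableEq V] (cl : (V × Bool) × (V × Bool)) (v : V) : ℕ :=
  (if cl.1.1 = v then 1 else 0) + (if cl.2.1 = v then 1 else 0)

/-- Number of occurrences of the literal `l` in the clause `cl`. -/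
def litOccIn {V : Type} [DecidableEq V] (cl : (V × Bool) × (V × Bool)) (l : V × Bool) : ℕ :=
  (if cl.1 = l then 1 else 0) + (if cl.2 = l then 1 else 0)

/-- Total number of occurrences of the variable `v` in the formula `Φ`. -/
def TwoSAT.occCount {V : Type} [DecidableEq V] (Φ : TwoSAT V) (v : V) : ℕ :=
  (Φ.clauses.map (fun cl => varOccIn cl v)).sum

/-- Number of positive occurrences of the variable `v` in the formula `Φ`. -/
def TwoSAT.posCount {V : Type} [DecidableEq V] (Φ : TwoSAT V) (v : V) : ℕ :=
  (Φ.clauses.map (fun cl => litOccIn cl (v, true))).sum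

/-- Number of negative occurrences of the variable `v` in the formula `Φ`. -/
def TwoSAT.negCount {V : Type} [DecidableEq V] (Φ : TwoSAT V) (v : V) : ℕ :=
  (Φ.clauses.map (fun cl => litOccIn cl (v, false))).sum

set_option linter.unusedSectionVars false
namespace TB


lemma sum_map_add {α : Type*} (l : List α) (f g : α → ℕ) :
    (l.map (fun x => f x + g x)).sum = (l.map f).sum + (l.map g).sum := by
  induction l with
  | nil => simp
  | cons a t ih => simp [ih]; ring

lemma sum_map_flatMap {α β : Type*} (l : List α) (f : α → List β) (g : β → ℕ) :
    ((l.flatMap f).map g).sum = (l.map (fun x => ((f x).map g).sum)).sum := by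
  induction l with
  | nil => simp
  | cons a t ih => simp [ih]

lemma sum_map_ind {α : Type*} [DecidableEq α] (l : List α) (c : α) :
    (l.map (fun v => if c = v then (1:ℕ) else 0)).sum = l.count c := by
  induction l with
  | nil => simp
  | cons a t ih =>
    simp only [List.map_cons, List.sum_cons, ih, List.count_cons, beq_iff_eq]
    by_cases h : c = a
    · simp only [if_pos h, if_pos (h.symm ▸ rfl : a = c)]; omega
    · simp [h, Ne.symm h]

lemma sum_single_le {α : Type*} (l : List α) (hl : l.Nodup) (h : α → ℕ) (c : α)
    (h0 : ∀ x ∈ l, x ≠ c → h x = 0) (hc : h c ≤ 1) : (l.map h).sum ≤ 1 := by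
  induction l with
  | nil => simp
  | cons a t ih =>
    simp only [List.map_cons, List.sum_cons]
    rcases List.nodup_cons.mp hl with ⟨hat, ht⟩
    by_cases hac : a = c
    · subst hac
      have : (t.map h).sum = 0 := by
        apply List.sum_eq_zero
        intro x hx
        rcases List.mem_map.mp hx with ⟨y, hy, rfl⟩
        exact h0 y (List.mem_cons_of_mem _ hy) (fun hyc => hat (hyc ▸ hy))
      omega
    · have ha0 : h a = 0 := h0 a (List.mem_cons_self) hac
      have := ih ht (fun x hx => h0 x (List.mem_cons_of_mem _ hx))
      omega

lemma sum_countP {α β : Type*} [DecidableEq α] (vs : List α) (hvs : vs.Nodup)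
    (l : List β) (f : β → α) (hf : ∀ b ∈ l, f b ∈ vs) :
    (vs.map (fun v => l.countP (fun j => f j = v))).sum = l.length := by
  induction l with
  | nil => simp
  | cons b t ih =>
    have ih' := ih (fun x hx => hf x (List.mem_cons_of_mem _ hx))
    calc (vs.map (fun v => (b::t).countP (fun j => decide (f j = v)))).sum
        = (vs.map (fun v => t.countP (fun j => decide (f j = v)) +
            (if f b = v then 1 else 0))).sum := by
          simp only [List.countP_cons, decide_eq_true_eq]
      _ = (vs.map (fun v => t.countP (fun j => decide (f j = v)))).sum +
            (vs.map (fun v => if f b = v then (1:ℕ) else 0)).sum := sum_map_add ..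
      _ = t.length + 1 := by
          rw [ih', sum_map_ind, List.count_eq_one_of_mem hvs (hf b (List.mem_cons_self))]
      _ = (b :: t).length := by simp [Nat.add_comm]

/-- Implications around a cycle force a constant Boolean function. -/
lemma fin_cycle_const {k : ℕ} (g : Fin k → Bool)
    (h : ∀ i : Fin k, g i = true →
      g ⟨(i.val + 1) % k, Nat.mod_lt _ (Nat.pos_of_ne_zero (by rintro rfl; exact absurd i.2 (by omega)))⟩ = true) :
    ∀ i j : Fin k, g i = g j := by
  intro i j
  have hk : 0 < k := i.pos
  have step : ∀ t : ℕ, ∀ i : Fin k, g i = true → g ⟨(i.val + t) % k, Nat.mod_lt _ hk⟩ = true := by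
    intro t
    induction t with
    | zero => intro i hi; simpa [Nat.mod_eq_of_lt i.2] using hi
    | succ t ih =>
      intro i hi
      have := h _ (ih i hi)
      rwa [show (⟨((i.val + t) % k + 1) % k, by exact Nat.mod_lt _ hk⟩ : Fin k)
          = ⟨(i.val + (t+1)) % k, Nat.mod_lt _ hk⟩ from
        Fin.ext (by simp only [Nat.mod_add_mod, Nat.add_assoc])] at this
  have key : ∀ i j : Fin k, g i = true → g j = true := by
    intro i j hi
    have e : ((i.val + (k + j.val - i.val) % k) % k) = j.val := by
      rw [Nat.add_mod_mod, show i.val + (k + j.val - i.val) = k + j.val from by omega,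
        Nat.add_mod_left, Nat.mod_eq_of_lt j.2]
    have := step ((k + j.val - i.val) % k) i hi
    rwa [show (⟨(i.val + (k + j.val - i.val) % k) % k, Nat.mod_lt _ hk⟩ : Fin k) = j from
      Fin.ext e] at this
  cases hgi : g i <;> cases hgj : g j
  · rfl
  · exact absurd (key j i hgj) (by simp [hgi])
  · exact absurd (key i j hgi) (by simp [hgj])
  · rfl


variable {V : Type} [Fintype V] [DecidableEq V] (Φ : TwoSAT V)

/-- Number of copy-variables. -/
def K : ℕ := 2 * Φ.clauses.length + Fintype.card V

/-- The original variable of which the copy `j` is a copy. -/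
def varOf (j : Fin (K Φ)) : V :=
  if h : j.val < 2 * Φ.clauses.length then
    (if j.val % 2 = 0 then (Φ.clauses.get ⟨j.val / 2, by omega⟩).1.1
     else (Φ.clauses.get ⟨j.val / 2, by omega⟩).2.1)
  else (Fintype.equivFin V).symm ⟨j.val - 2 * Φ.clauses.length, by
    have := j.2; unfold K at this; omega⟩

/-- The designated copy of the variable `v`. -/
def desig (v : V) : Fin (K Φ) :=
  ⟨2 * Φ.clauses.length + (Fintype.equivFin V v).val, by
    have := (Fintype.equivFin V v).2; unfold K; omega⟩

lemma varOf_desig (v : V) : varOf Φ (desig Φ v) = v := by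
  unfold varOf desig
  rw [dif_neg (by simp only [Fin.val_mk]; omega)]
  simp

lemma varOf_even (i : Fin Φ.clauses.length) (h : 2 * i.val < K Φ) :
    varOf Φ ⟨2 * i.val, h⟩ = (Φ.clauses.get i).1.1 := by
  unfold varOf
  rw [dif_pos (by simp only [Fin.val_mk]; omega), if_pos (by simp only [Fin.val_mk]; omega)]
  rw [show (⟨(⟨2 * i.val, h⟩ : Fin (K Φ)).val / 2,
      by simp only [Fin.val_mk]; omega⟩ : Fin Φ.clauses.length) = i from
    Fin.ext (by simp only [Fin.val_mk]; omega)]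

lemma varOf_odd (i : Fin Φ.clauses.length) (h : 2 * i.val + 1 < K Φ) :
    varOf Φ ⟨2 * i.val + 1, h⟩ = (Φ.clauses.get i).2.1 := by
  unfold varOf
  rw [dif_pos (by simp only [Fin.val_mk]; omega), if_neg (by simp only [Fin.val_mk]; omega)]
  rw [show (⟨(⟨2 * i.val + 1, h⟩ : Fin (K Φ)).val / 2,
      by simp only [Fin.val_mk]; omega⟩ : Fin Φ.clauses.length) = i from
    Fin.ext (by simp only [Fin.val_mk]; omega)]

/-- All copies of the variable `v`. -/
def copies (v : V) : List (Fin (K Φ)) :=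
  (List.finRange (K Φ)).filter (fun j => varOf Φ j = v)

lemma mem_copies {v : V} {j : Fin (K Φ)} : j ∈ copies Φ v ↔ varOf Φ j = v := by
  simp [copies, List.mem_filter]

lemma copies_nodup (v : V) : (copies Φ v).Nodup :=
  (List.nodup_finRange _).filter _

/-- The implication cycle clauses on a list of copies. -/
def cyc {α : Type*} (L : List α) : List ((α × Bool) × (α × Bool)) :=
  (L.zip (L.rotate 1)).map (fun p => ((p.1, false), (p.2, true)))

def clausePart : List ((Fin (K Φ) × Bool) × (Fin (K Φ) × Bool)) :=
  List.ofFn (fun i : Fin Φ.clauses.length =>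
    ((⟨2 * i.val, by unfold K; omega⟩, (Φ.clauses.get i).1.2),
     (⟨2 * i.val + 1, by unfold K; omega⟩, (Φ.clauses.get i).2.2)))

def cyclePart : List ((Fin (K Φ) × Bool) × (Fin (K Φ) × Bool)) :=
  (Finset.univ : Finset V).toList.flatMap (fun v => cyc (copies Φ v))

def Φ' : TwoSAT (Fin (K Φ)) := ⟨clausePart Φ ++ cyclePart Φ⟩

lemma const_on_of_cyc {α : Type} (a' : α → Bool) (L : List α)
    (h : ∀ cl ∈ cyc L, litSat a' cl.1 ∨ litSat a' cl.2) :
    ∀ x ∈ L, ∀ y ∈ L, a' x = a' y := by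
  intro x hx y hy
  rcases List.mem_iff_get.mp hx with ⟨i, rfl⟩
  rcases List.mem_iff_get.mp hy with ⟨j, rfl⟩
  have hkpos : 0 < L.length := i.pos
  have himp : ∀ i : Fin L.length, a' (L.get i) = true →
      a' (L.get ⟨(i.val + 1) % L.length, Nat.mod_lt _ hkpos⟩) = true := by
    intro i hi
    have hlen : (L.zip (L.rotate 1)).length = L.length := by
      simp [List.length_zip, List.length_rotate]
    have hmem : ((L.get i, L.get ⟨(i.val + 1) % L.length, Nat.mod_lt _ hkpos⟩) : α × α)
        ∈ L.zip (L.rotate 1) := by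
      have hgl : (L.zip (L.rotate 1))[i.val]'(by omega)
          = (L.get i, L.get ⟨(i.val + 1) % L.length, Nat.mod_lt _ hkpos⟩) := by
        rw [List.getElem_zip, List.getElem_rotate]
        simp [List.get_eq_getElem]
      rw [← hgl]
      exact List.getElem_mem _
    have hc := h _ (List.mem_map_of_mem hmem)
    rcases hc with h1 | h2
    · exact absurd hi (by simpa [litSat] using h1)
    · simpa [litSat] using h2
  exact fin_cycle_const (fun i => a' (L.get i)) himp i j

lemma sat_cycle_eq (a' : Fin (K Φ) → Bool)
    (h : ∀ cl ∈ cyclePart Φ, litSat a' cl.1 ∨ litSat a' cl.2) (j : Fin (K Φ)) :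
    a' j = a' (desig Φ (varOf Φ j)) := by
  have hcyc : ∀ cl ∈ cyc (copies Φ (varOf Φ j)), litSat a' cl.1 ∨ litSat a' cl.2 := by
    intro cl hcl
    exact h _ (List.mem_flatMap.mpr ⟨varOf Φ j, by simp [Finset.mem_toList], hcl⟩)
  exact const_on_of_cyc a' _ hcyc j ((mem_copies Φ).mpr rfl) _
    ((mem_copies Φ).mpr (varOf_desig Φ _))

lemma sat_lift (a : V → Bool) (ha : Φ.Sat a) : (Φ' Φ).Sat (fun j => a (varOf Φ j)) := by
  intro cl hcl
  rcases List.mem_append.mp hcl with hc | hc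
  · rcases List.mem_ofFn.mp hc with ⟨i, rfl⟩
    rcases ha (Φ.clauses.get i) (Φ.clauses.get_mem i) with h1 | h1
    · left; simpa [litSat, varOf_even] using h1
    · right; simpa [litSat, varOf_odd] using h1
  · rcases List.mem_flatMap.mp hc with ⟨v, hv, hcl'⟩
    rcases List.mem_map.mp hcl' with ⟨p, hp, rfl⟩
    rcases List.of_mem_zip hp with ⟨h1, h2⟩
    have e1 : varOf Φ p.1 = v := (mem_copies Φ).mp h1
    have e2 : varOf Φ p.2 = v := (mem_copies Φ).mp (List.mem_rotate.mp h2)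
    by_cases hav : a v = true
    · right; simp [litSat, e2, hav]
    · left; simp only [litSat, e1]
      simpa using hav

lemma sat_proj (a' : Fin (K Φ) → Bool) (h : (Φ' Φ).Sat a') :
    Φ.Sat (fun v => a' (desig Φ v)) := by
  intro cl hcl
  rcases List.mem_iff_get.mp hcl with ⟨i, rfl⟩
  have hcl' := h _ (List.mem_append.mpr (Or.inl (List.mem_ofFn.mpr ⟨i, rfl⟩)))
  have heq := sat_cycle_eq Φ a' (fun cl hc => h cl (List.mem_append.mpr (Or.inr hc)))
  have hK1 : 2 * i.val < K Φ := by have := i.2; unfold K; omega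
  have hK2 : 2 * i.val + 1 < K Φ := by have := i.2; unfold K; omega
  rcases hcl' with h1 | h1
  · left
    show a' (desig Φ (Φ.clauses.get i).1.1) = (Φ.clauses.get i).1.2
    rw [← varOf_even Φ i hK1, ← heq ⟨2 * i.val, hK1⟩]
    exact h1
  · right
    show a' (desig Φ (Φ.clauses.get i).2.1) = (Φ.clauses.get i).2.2
    rw [← varOf_odd Φ i hK2, ← heq ⟨2 * i.val + 1, hK2⟩]
    exact h1

lemma sat_unique (a' : Fin (K Φ) → Bool) (h : (Φ' Φ).Sat a') :
    a' = fun j => a' (desig Φ (varOf Φ j)) := by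
  funext j
  exact sat_cycle_eq Φ a' (fun cl hc => h cl (List.mem_append.mpr (Or.inr hc))) j

lemma vocc_split (cl : (V × Bool) × (V × Bool)) (v : V) :
    varOccIn cl v = litOccIn cl (v, true) + litOccIn cl (v, false) := by
  obtain ⟨⟨x, s⟩, ⟨y, t⟩⟩ := cl
  cases s <;> cases t <;> by_cases hx : x = v <;> by_cases hy : y = v <;>
    simp [varOccIn, litOccIn, Prod.ext_iff, hx, hy]

lemma litOcc_le_vocc (cl : (V × Bool) × (V × Bool)) (l : V × Bool) :
    litOccIn cl l ≤ varOccIn cl l.1 := by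
  unfold litOccIn varOccIn
  apply Nat.add_le_add <;> split <;> simp_all

lemma clausePart_vocc (j : Fin (K Φ)) :
    ((clausePart Φ).map (fun cl => varOccIn cl j)).sum ≤ 1 := by
  rw [clausePart, List.map_ofFn, List.sum_ofFn]
  have hb : ∀ i : Fin Φ.clauses.length, (fun cl => varOccIn cl j)
      (((⟨2 * i.val, by unfold K; omega⟩, (Φ.clauses.get i).1.2),
        (⟨2 * i.val + 1, by unfold K; omega⟩, (Φ.clauses.get i).2.2)))
      ≤ if i.val = j.val / 2 then 1 else 0 := by
    intro i
    simp only [varOccIn, Fin.ext_iff, Fin.val_mk]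
    split_ifs <;> omega
  calc ∑ i, (fun cl => varOccIn cl j) _ ≤ ∑ i : Fin Φ.clauses.length,
        (if i.val = j.val / 2 then 1 else 0) := Finset.sum_le_sum (fun i _ => hb i)
    _ ≤ 1 := by
        by_cases hc : j.val / 2 < Φ.clauses.length
        · have : ∀ i : Fin Φ.clauses.length, (if i.val = j.val / 2 then (1:ℕ) else 0)
              = if i = ⟨j.val / 2, hc⟩ then 1 else 0 := by
            intro i; congr 1; simp [Fin.ext_iff]
          simp only [this]
          rw [Finset.sum_ite_eq' Finset.univ]
          simp
        · apply le_of_eq_of_le (Finset.sum_eq_zero ?_) (by omega)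
          intro i _
          have := i.2
          rw [if_neg (by omega)]

lemma cyc_locc {α : Type} [DecidableEq α] (L : List α) (hL : L.Nodup) (j : α) (s : Bool) :
    ((cyc L).map (fun cl => litOccIn cl (j, s))).sum ≤ 1 := by
  unfold cyc
  rw [List.map_map]
  cases s
  · have he : ((fun cl => litOccIn cl (j, false)) ∘ fun p : α × α => ((p.1, false), (p.2, true)))
        = (fun x => if j = x then (1:ℕ) else 0) ∘ Prod.fst := by
      funext p
      by_cases h : p.1 = j
      · simp [litOccIn, h]
      · simp [litOccIn, h, Ne.symm h]
    rw [he, ← List.map_map, List.map_fst_zip (by simp), sum_map_ind]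
    exact List.nodup_iff_count_le_one.mp hL j
  · have he : ((fun cl => litOccIn cl (j, true)) ∘ fun p : α × α => ((p.1, false), (p.2, true)))
        = (fun x => if j = x then (1:ℕ) else 0) ∘ Prod.snd := by
      funext p
      by_cases h : p.2 = j
      · simp [litOccIn, h]
      · simp [litOccIn, h, Ne.symm h]
    rw [he, ← List.map_map, List.map_snd_zip (by simp), sum_map_ind,
      (List.rotate_perm L 1).count_eq]
    exact List.nodup_iff_count_le_one.mp hL j

lemma cyc_locc_zero {α : Type} [DecidableEq α] (L : List α) (j : α)
    (hj : ∀ x ∈ L, x ≠ j) (s : Bool) :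
    ((cyc L).map (fun cl => litOccIn cl (j, s))).sum = 0 := by
  apply List.sum_eq_zero
  intro n hn
  rcases List.mem_map.mp hn with ⟨cl, hcl, rfl⟩
  rcases List.mem_map.mp hcl with ⟨p, hp, rfl⟩
  rcases List.of_mem_zip hp with ⟨h1, h2⟩
  have n1 : p.1 ≠ j := hj _ h1
  have n2 : p.2 ≠ j := hj _ (List.mem_rotate.mp h2)
  cases s <;> simp [litOccIn, Prod.ext_iff, n1, n2]

lemma cyclePart_locc (j : Fin (K Φ)) (s : Bool) :
    ((cyclePart Φ).map (fun cl => litOccIn cl (j, s))).sum ≤ 1 := by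
  rw [cyclePart, sum_map_flatMap]
  apply sum_single_le _ Finset.univ.nodup_toList _ (varOf Φ j)
  · intro v _ hv
    apply cyc_locc_zero
    intro x hx
    have := (mem_copies Φ).mp hx
    intro hxj
    exact hv (by rw [← this, hxj])
  · exact cyc_locc _ (copies_nodup Φ _) j s

lemma cyclePart_vocc (j : Fin (K Φ)) :
    ((cyclePart Φ).map (fun cl => varOccIn cl j)).sum ≤ 2 := by
  have : ((cyclePart Φ).map (fun cl => varOccIn cl j)).sum
      = ((cyclePart Φ).map (fun cl => litOccIn cl (j, true))).sum
        + ((cyclePart Φ).map (fun cl => litOccIn cl (j, false))).sum := by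
    rw [← sum_map_add]
    congr 1
    exact List.map_congr_left (fun cl _ => vocc_split cl j)
  rw [this]
  have h1 := cyclePart_locc Φ j true
  have h2 := cyclePart_locc Φ j false
  omega

lemma occ_bounds (j : Fin (K Φ)) :
    (Φ' Φ).occCount j ≤ 3 ∧ (Φ' Φ).posCount j ≤ 2 ∧ (Φ' Φ).negCount j ≤ 2 := by
  have hsplit : ∀ f : ((Fin (K Φ) × Bool) × (Fin (K Φ) × Bool)) → ℕ,
      ((Φ' Φ).clauses.map f).sum = ((clausePart Φ).map f).sum + ((cyclePart Φ).map f).sum := by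
    intro f
    show (((clausePart Φ) ++ (cyclePart Φ)).map f).sum = _
    rw [List.map_append, List.sum_append]
  have hposle : ((clausePart Φ).map (fun cl => litOccIn cl (j, true))).sum
      ≤ ((clausePart Φ).map (fun cl => varOccIn cl j)).sum :=
    List.sum_le_sum (fun cl _ => litOcc_le_vocc cl (j, true))
  have hnegle : ((clausePart Φ).map (fun cl => litOccIn cl (j, false))).sum
      ≤ ((clausePart Φ).map (fun cl => varOccIn cl j)).sum :=
    List.sum_le_sum (fun cl _ => litOcc_le_vocc cl (j, false))
  have h1 := clausePart_vocc Φ j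
  have h2 := cyclePart_vocc Φ j
  have h3 := cyclePart_locc Φ j true
  have h4 := cyclePart_locc Φ j false
  refine ⟨?_, ?_, ?_⟩
  · rw [TwoSAT.occCount, hsplit]; omega
  · rw [TwoSAT.posCount, hsplit]; omega
  · rw [TwoSAT.negCount, hsplit]; omega

lemma length_bound : (Φ' Φ).clauses.length ≤ Φ.clauses.length + K Φ := by
  show ((clausePart Φ) ++ (cyclePart Φ)).length ≤ _
  rw [List.length_append]
  have h1 : (clausePart Φ).length = Φ.clauses.length := by
    simp [clausePart]
  have h2 : (cyclePart Φ).length = K Φ := by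
    rw [cyclePart, List.length_flatMap]
    have he : ∀ v : V, (cyc (copies Φ v)).length
        = (List.finRange (K Φ)).countP (fun j => varOf Φ j = v) := by
      intro v
      simp [cyc, List.length_zip, List.length_rotate, copies, List.countP_eq_length_filter]
    calc ((Finset.univ : Finset V).toList.map (fun v => (cyc (copies Φ v)).length)).sum
        = ((Finset.univ : Finset V).toList.map
            (fun v => (List.finRange (K Φ)).countP (fun j => varOf Φ j = v))).sum := by
          congr 1; exact List.map_congr_left (fun v _ => he v)
      _ = (List.finRange (K Φ)).length :=
          sum_countP _ Finset.univ.nodup_toList _ _ (fun b _ => Finset.mem_toList.mpr (Finset.mem_univ _))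
      _ = K Φ := by simp
  omega

lemma clause_distinct : ∀ cl ∈ (Φ' Φ).clauses, cl.1 ≠ cl.2 := by
  intro cl hcl
  rcases List.mem_append.mp hcl with hc | hc
  · rcases List.mem_ofFn.mp hc with ⟨i, rfl⟩
    simp only [ne_eq, Prod.ext_iff, Fin.ext_iff, Fin.val_mk]
    omega
  · rcases List.mem_flatMap.mp hc with ⟨v, _, hcl'⟩
    rcases List.mem_map.mp hcl' with ⟨p, _, rfl⟩
    simp [Prod.ext_iff]

lemma vertex_image :
    (fun x : Fin (K Φ) → ℝ => x ∘ desig Φ) ''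
      {x | ∃ a' : Fin (K Φ) → Bool, (Φ' Φ).Sat a' ∧ x = fun v => if a' v then (1:ℝ) else 0}
    = {x | ∃ a : V → Bool, Φ.Sat a ∧ x = fun v => if a v then (1:ℝ) else 0} := by
  ext y
  constructor
  · rintro ⟨x, ⟨a', ha', rfl⟩, rfl⟩
    exact ⟨fun v => a' (desig Φ v), sat_proj Φ a' ha', rfl⟩
  · rintro ⟨a, ha, rfl⟩
    refine ⟨fun j => if a (varOf Φ j) then (1:ℝ) else 0,
      ⟨fun j => a (varOf Φ j), sat_lift Φ a ha, rfl⟩, ?_⟩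
    funext v
    simp [Function.comp, varOf_desig]

end TB

/-- Every 2-SAT formula (each clause having exactly two literals) can be turned into an
equivalent 3-bounded 2-SAT formula: each variable occurs in at most three clauses, at most
twice positively and at most twice negatively, and a coordinate projection restricts to a
bijection between the satisfying assignments; consequently the induced linear projection
maps `SAT(Φ')` onto `SAT(Φ)`. -/
theorem twoSAT_to_threeBounded {V : Type} [Fintype V] [DecidableEq V] (Φ : TwoSAT V)
    (hΦ : ∀ cl ∈ Φ.clauses, cl.1 ≠ cl.2) :
    ∃ (K : ℕ) (Φ' : TwoSAT (Fin K)) (ι : V → Fin K),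
      K ≤ 2 * Φ.clauses.length + Fintype.card V ∧
      Φ'.clauses.length ≤ Φ.clauses.length + K ∧
      (∀ cl ∈ Φ'.clauses, cl.1 ≠ cl.2) ∧
      (∀ v' : Fin K, Φ'.occCount v' ≤ 3 ∧ Φ'.posCount v' ≤ 2 ∧ Φ'.negCount v' ≤ 2) ∧
      (∀ a' : Fin K → Bool, Φ'.Sat a' → Φ.Sat (a' ∘ ι)) ∧
      (∀ a : V → Bool, Φ.Sat a → ∃! a' : Fin K → Bool, Φ'.Sat a' ∧ a' ∘ ι = a) ∧
      (fun x : Fin K → ℝ => x ∘ ι) '' SATpoly Φ' = SATpoly Φ := by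
  classical
  refine ⟨TB.K Φ, TB.Φ' Φ, TB.desig Φ, le_refl _, TB.length_bound Φ, TB.clause_distinct Φ,
    TB.occ_bounds Φ, ?_, ?_, ?_⟩
  · intro a' h
    exact TB.sat_proj Φ a' h
  · intro a ha
    refine ⟨fun j => a (TB.varOf Φ j), ⟨TB.sat_lift Φ a ha,
      funext fun v => by simp [Function.comp, TB.varOf_desig]⟩, ?_⟩
    rintro b' ⟨hb, rfl⟩
    funext j
    exact TB.sat_cycle_eq Φ b' (fun cl hc => hb cl (List.mem_append.mpr (Or.inr hc))) j
  · have h1 : (fun x : Fin (TB.K Φ) → ℝ => x ∘ TB.desig Φ)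
        = ⇑(LinearMap.funLeft ℝ ℝ (TB.desig Φ)) := rfl
    show (fun x => x ∘ TB.desig Φ) '' SATpoly (TB.Φ' Φ) = SATpoly Φ
    rw [SATpoly, SATpoly, h1, LinearMap.image_convexHull, ← h1, TB.vertex_image Φ]
end
end

section
/- There exists a constant c such that for every instance (J,M) of P||C_max with n jobs and m machines, both of the following hold: (i) the polytope Q̄(J,M) = conv{ x^σ : σ is an optimal schedule of (J,M) } satisfies xc(Q̄(J,M)) ≤ 2^{c·n}·m, and (ii) xc(P(J,M)) ≤ 2^{c·n}·m. -/
open Finset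

noncomputable section

/-- An extended formulation of size `k` (number of inequalities) for `P ⊆ ℝ^ι`. -/
def IsEF {ι : Type} [Fintype ι] (P : Set (ι → ℝ)) (k : ℕ) : Prop :=
  ∃ (e l : ℕ) (A : Matrix (Fin k) (Fin e) ℝ) (b : Fin k → ℝ)
    (C : Matrix (Fin l) (Fin e) ℝ) (d : Fin l → ℝ)
    (π : (Fin e → ℝ) →ᵃ[ℝ] (ι → ℝ)),
    π '' {y | (∀ r, A.mulVec y r ≤ b r) ∧ (∀ r, C.mulVec y r = d r)} = P

/-- The extension complexity of `P`. -/
noncomputable def xc {ι : Type} [Fintype ι] (P : Set (ι → ℝ)) : ℕ :=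
  sInf {k | IsEF P k}

/-- The load of machine `i` under schedule `σ`. -/
def load {n m : ℕ} (p : Fin n → ℕ) (σ : Fin n → Fin m) (i : Fin m) : ℕ :=
  ∑ j, if σ j = i then p j else 0

/-- The makespan of a schedule: the maximum machine load. -/
def makespan {n m : ℕ} (p : Fin n → ℕ) (σ : Fin n → Fin m) : ℕ :=
  Finset.univ.sup (load p σ)

/-- The optimal makespan of the instance. -/
noncomputable def optMakespan (n m : ℕ) (p : Fin n → ℕ) : ℕ :=
  sInf {t | ∃ σ : Fin n → Fin m, makespan p σ = t}

/-- The 0/1 assignment vector of a schedule, indexed by machine-job pairs. -/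
def assignVec {n m : ℕ} (σ : Fin n → Fin m) : Fin m × Fin n → ℝ :=
  fun q => if σ q.2 = q.1 then 1 else 0

/-- `Q(J,M)`: the convex hull of the assignment vectors of all schedules. -/
def Qpoly (n m : ℕ) : Set (Fin m × Fin n → ℝ) :=
  convexHull ℝ {x | ∃ σ : Fin n → Fin m, x = assignVec σ}

/-- `P(J,M)`: the convex hull of all points `(x^σ, T)` where `σ` is a schedule and the
natural number `T` upper-bounds every machine load; the `T`-coordinate is the `none`
coordinate of the ambient space `ℝ^(Option (M × J))`. -/
def Ppoly (n m : ℕ) (p : Fin n → ℕ) : Set (Option (Fin m × Fin n) → ℝ) :=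
  convexHull ℝ {z | ∃ (σ : Fin n → Fin m) (t : ℕ), (∀ i, load p σ i ≤ t) ∧
    z = fun q => Option.elim q (t : ℝ) (fun ij => assignVec σ ij)}


set_option linter.unusedSectionVars false
set_option linter.unusedVariables false
set_option maxHeartbeats 1000000

lemma isEF_card {ι κ L : Type} [Fintype ι] [Fintype κ] [Fintype L]
    (g : L → κ → ℝ) (d : L → ℝ) (π : (κ → ℝ) →ᵃ[ℝ] (ι → ℝ)) (P : Set (ι → ℝ))
    (h : π '' {y : κ → ℝ | (∀ a, 0 ≤ y a) ∧ ∀ r, ∑ a, g r a * y a = d r} = P) :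
    IsEF P (Fintype.card κ) := by
  classical
  let ek : Fin (Fintype.card κ) ≃ κ := (Fintype.equivFin κ).symm
  let el : Fin (Fintype.card L) ≃ L := (Fintype.equivFin L).symm
  refine ⟨Fintype.card κ, Fintype.card L, -(1 : Matrix _ _ ℝ), 0,
    Matrix.of (fun r j => g (el r) (ek j)), fun r => d (el r),
    π.comp (LinearMap.funLeft ℝ ℝ ek.symm).toAffineMap, ?_⟩
  rw [← h]
  ext x
  simp only [Set.mem_image, Set.mem_setOf_eq, AffineMap.comp_apply,
    LinearMap.coe_toAffineMap, LinearMap.funLeft_apply]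
  constructor
  · rintro ⟨z, ⟨hz1, hz2⟩, rfl⟩
    refine ⟨z ∘ ek.symm, ⟨fun a => ?_, fun r => ?_⟩, rfl⟩
    · have := hz1 (ek.symm a)
      simpa [Matrix.neg_mulVec, Matrix.one_mulVec] using this
    · have := hz2 (el.symm r)
      rw [Matrix.mulVec, dotProduct] at this
      simp only [Matrix.of_apply, Equiv.apply_symm_apply] at this
      rw [← this]
      exact Fintype.sum_equiv ek.symm _ _ (fun a => by simp)
  · rintro ⟨y, ⟨hy1, hy2⟩, rfl⟩
    refine ⟨y ∘ ek, ⟨fun r => ?_, fun r => ?_⟩, ?_⟩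
    · simpa [Matrix.neg_mulVec, Matrix.one_mulVec] using hy1 (ek r)
    · rw [Matrix.mulVec, dotProduct]
      simp only [Matrix.of_apply, Function.comp_apply]
      have := hy2 (el r)
      rw [← this]
      exact Fintype.sum_equiv ek _ _ (fun j => by simp)
    · congr 1
      ext a
      simp

section DP

variable {V ι : Type} [Fintype V] [DecidableEq V] [Fintype ι] {m : ℕ}

def nodeSeq (v₀ : V) (t : Fin m → V) : ℕ → V :=
  fun k => if h : k - 1 < m ∧ 0 < k then t ⟨k - 1, h.1⟩ else v₀

lemma nodeSeq_zero (v₀ : V) (t : Fin m → V) : nodeSeq v₀ t 0 = v₀ := by simp [nodeSeq]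

lemma nodeSeq_succ (v₀ : V) (t : Fin m → V) (k : ℕ) (h : k < m) :
    nodeSeq v₀ t (k + 1) = t ⟨k, h⟩ := by simp [nodeSeq, h]

def IsPath (v₀ : V) (E : ℕ → V → V → Prop) (t : Fin m → V) : Prop :=
  ∀ i : Fin m, E i (nodeSeq v₀ t i) (nodeSeq v₀ t (i + 1))

def outVec (v₀ : V) (wt : ℕ → V → V → ι → ℝ) (t : Fin m → V) : ι → ℝ :=
  fun q => ∑ i : Fin m, wt i (nodeSeq v₀ t i) (nodeSeq v₀ t (i + 1)) q

def pathFlow (v₀ : V) (t : Fin m → V) : Fin m × V × V → ℝ :=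
  fun a => if nodeSeq v₀ t a.1 = a.2.1 ∧ nodeSeq v₀ t (a.1 + 1) = a.2.2 then 1 else 0

def Feas (v₀ : V) (E : ℕ → V → V → Prop) : Set (Fin m × V × V → ℝ) :=
  {y | (∀ a, 0 ≤ y a) ∧ (∀ a, ¬ E a.1.1 a.2.1 a.2.2 → y a = 0) ∧
    (∑ a : Fin m × V × V, (if (a.1 : ℕ) = 0 then y a else 0)) = 1 ∧
    ∀ (i : Fin m) (h : (i : ℕ) + 1 < m) (v : V),
      (∑ u, y (i, u, v)) = ∑ w, y (⟨(i : ℕ) + 1, h⟩, v, w)}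

def phi (wt : ℕ → V → V → ι → ℝ) : (Fin m × V × V → ℝ) →ₗ[ℝ] (ι → ℝ) where
  toFun y := fun q => ∑ a : Fin m × V × V, y a * wt a.1 a.2.1 a.2.2 q
  map_add' y z := by funext q; simp [add_mul, Finset.sum_add_distrib]
  map_smul' c y := by funext q; simp [Finset.mul_sum, mul_assoc]

lemma sum_arc_layer (f : Fin m × V × V → ℝ) (k : ℕ) (hk : k < m) :
    (∑ a : Fin m × V × V, (if (a.1 : ℕ) = k then f a else 0))
      = ∑ u, ∑ v, f (⟨k, hk⟩, u, v) := by
  rw [Fintype.sum_prod_type]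
  have : ∀ i : Fin m, ((i : ℕ) = k) = (i = ⟨k, hk⟩) := fun i => by
    simp [Fin.ext_iff]
  simp_rw [this]
  rw [Finset.sum_eq_single (⟨k, hk⟩ : Fin m)]
  · simp [Fintype.sum_prod_type]
  · intro b _ hb; simp [hb]
  · intro h; exact absurd (Finset.mem_univ _) h

lemma sum_arc_snd (f : Fin m × V × V → ℝ) (i : Fin m) (v : V) :
    (∑ a : Fin m × V × V, (if a.1 = i ∧ a.2.2 = v then f a else 0))
      = ∑ u, f (i, u, v) := by
  rw [Fintype.sum_prod_type]
  rw [Finset.sum_eq_single i]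
  · rw [Fintype.sum_prod_type]
    apply Finset.sum_congr rfl
    intro u _
    simp [Finset.sum_ite_eq']
  · intro b _ hb
    apply Finset.sum_eq_zero; intro x _
    simp [hb]
  · intro h; exact absurd (Finset.mem_univ _) h

lemma sum_arc_fst (f : Fin m × V × V → ℝ) (i : Fin m) (v : V) :
    (∑ a : Fin m × V × V, (if a.1 = i ∧ a.2.1 = v then f a else 0))
      = ∑ w, f (i, v, w) := by
  rw [Fintype.sum_prod_type]
  rw [Finset.sum_eq_single i]
  · rw [Fintype.sum_prod_type]
    rw [Finset.sum_eq_single v]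
    · simp
    · intro b _ hb; apply Finset.sum_eq_zero; intro x _; simp [hb]
    · intro h; exact absurd (Finset.mem_univ _) h
  · intro b _ hb
    apply Finset.sum_eq_zero; intro x _
    simp [hb]
  · intro h; exact absurd (Finset.mem_univ _) h

-- NEW PART BELOW

lemma feas_layer_sum {v₀ : V} {E : ℕ → V → V → Prop} {y : Fin m × V × V → ℝ}
    (hy : y ∈ Feas v₀ E) : ∀ (k : ℕ) (hk : k < m), (∑ u, ∑ v, y (⟨k, hk⟩, u, v)) = 1 := by
  intro k
  induction k with
  | zero => intro hk; rw [← sum_arc_layer y 0 hk]; exact hy.2.2.1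
  | succ k ih =>
    intro hk1
    have hk : k < m := Nat.lt_of_succ_lt hk1
    have h2 : ∀ v, (∑ u, y (⟨k, hk⟩, u, v)) = ∑ w, y (⟨k+1, hk1⟩, v, w) :=
      fun v => hy.2.2.2 ⟨k, hk⟩ hk1 v
    have h3 : (∑ u, ∑ v, y (⟨k+1, hk1⟩, u, v)) = ∑ v, ∑ u, y (⟨k, hk⟩, u, v) :=
      Finset.sum_congr rfl (fun v _ => (h2 v).symm)
    rw [h3, Finset.sum_comm, ih hk]

lemma pathFlow_layer_sum (v₀ : V) (t : Fin m → V) (i : Fin m) :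
    (∑ u, ∑ v, pathFlow v₀ t (i, u, v)) = 1 := by
  unfold pathFlow
  rw [Finset.sum_eq_single (nodeSeq v₀ t i)]
  · rw [Finset.sum_eq_single (nodeSeq v₀ t ((i : ℕ) + 1))]
    · simp
    · intro b _ hb; simp [Ne.symm hb]
    · intro h; exact absurd (Finset.mem_univ _) h
  · intro b _ hb; apply Finset.sum_eq_zero; intro x _; simp [Ne.symm hb]
  · intro h; exact absurd (Finset.mem_univ _) h

lemma pathFlow_mem_feas {v₀ : V} {E : ℕ → V → V → Prop} {t : Fin m → V}
    (ht : IsPath v₀ E t) (hm : 0 < m) : pathFlow v₀ t ∈ Feas v₀ E := by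
  refine ⟨fun a => by unfold pathFlow; split <;> norm_num, fun a hne => ?_, ?_, ?_⟩
  · unfold pathFlow
    rw [if_neg]
    rintro ⟨h1, h2⟩
    exact hne (by rw [← h1, ← h2]; exact ht a.1)
  · rw [sum_arc_layer _ 0 hm]
    exact pathFlow_layer_sum v₀ t ⟨0, hm⟩
  · intro i h v
    have hnext : nodeSeq v₀ t (((i : ℕ) + 1 : ℕ)) = nodeSeq v₀ t ((⟨(i : ℕ) + 1, h⟩ : Fin m) : ℕ) := rfl
    by_cases hv : v = nodeSeq v₀ t ((i : ℕ) + 1)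
    · subst hv
      rw [Finset.sum_eq_single (nodeSeq v₀ t i), Finset.sum_eq_single (nodeSeq v₀ t ((i : ℕ) + 1 + 1))]
      · simp [pathFlow]
      · intro b _ hb; simp [pathFlow, Ne.symm hb]
      · intro h; exact absurd (Finset.mem_univ _) h
      · intro b _ hb; simp [pathFlow, Ne.symm hb]
      · intro h; exact absurd (Finset.mem_univ _) h
    · rw [Finset.sum_eq_zero, Finset.sum_eq_zero]
      · intro w _; simp only [pathFlow]
        rw [if_neg]; rintro ⟨h1, h2⟩; exact hv h1.symm
      · intro u _; simp only [pathFlow]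
        rw [if_neg]; rintro ⟨h1, h2⟩; exact hv h2.symm

lemma phi_pathFlow (v₀ : V) (wt : ℕ → V → V → ι → ℝ) (t : Fin m → V) :
    phi wt (pathFlow v₀ t) = outVec v₀ wt t := by
  funext q
  show (∑ a : Fin m × V × V, pathFlow v₀ t a * wt a.1 a.2.1 a.2.2 q) = _
  rw [Fintype.sum_prod_type]
  apply Finset.sum_congr rfl
  intro i _
  rw [Fintype.sum_prod_type]
  rw [Finset.sum_eq_single (nodeSeq v₀ t i), Finset.sum_eq_single (nodeSeq v₀ t ((i : ℕ) + 1))]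
  · simp [pathFlow]
  · intro b _ hb; simp [pathFlow, Ne.symm hb]
  · intro h; exact absurd (Finset.mem_univ _) h
  · intro b _ hb
    apply Finset.sum_eq_zero; intro x _
    simp [pathFlow, Ne.symm hb]
  · intro h; exact absurd (Finset.mem_univ _) h

lemma feas_convex (v₀ : V) (E : ℕ → V → V → Prop) : Convex ℝ (Feas (m := m) v₀ E) := by
  rintro y hy z hz a b ha hb hab
  have happ : ∀ q, (a • y + b • z) q = a * y q + b * z q := fun q => by
    simp [smul_eq_mul]
  refine ⟨fun q => ?_, fun q hq => ?_, ?_, ?_⟩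
  · rw [happ]; exact add_nonneg (mul_nonneg ha (hy.1 q)) (mul_nonneg hb (hz.1 q))
  · rw [happ, hy.2.1 q hq, hz.2.1 q hq]; ring
  · have : ∀ q : Fin m × V × V, (if ((q.1 : ℕ) = 0) then (a • y + b • z) q else 0)
        = a * (if ((q.1 : ℕ) = 0) then y q else 0) + b * (if ((q.1 : ℕ) = 0) then z q else 0) := by
      intro q; rw [happ]; split <;> ring
    rw [Finset.sum_congr rfl (fun q _ => this q), Finset.sum_add_distrib,
      ← Finset.mul_sum, ← Finset.mul_sum, hy.2.2.1, hz.2.2.1]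
    simpa using hab
  · intro i h v
    have l1 := hy.2.2.2 i h v
    have l2 := hz.2.2.2 i h v
    simp only [happ]
    rw [Finset.sum_add_distrib, Finset.sum_add_distrib, ← Finset.mul_sum, ← Finset.mul_sum,
      ← Finset.mul_sum, ← Finset.mul_sum, l1, l2]

lemma exists_pos_path {v₀ : V} {E : ℕ → V → V → Prop} (hm : 0 < m)
    (hE0 : ∀ u v, E 0 u v → u = v₀) {y : Fin m × V × V → ℝ} (hy : y ∈ Feas v₀ E) :
    ∃ t : Fin m → V, IsPath v₀ E t ∧
      ∀ i : Fin m, 0 < y (i, nodeSeq v₀ t i, nodeSeq v₀ t ((i : ℕ) + 1)) := by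
  classical
  set Y : ℕ → V → V → ℝ := fun k u v => if h : k < m then y (⟨k, h⟩, u, v) else 0 with hY
  let g : ℕ → V := fun k => Nat.rec v₀ (fun k gk => if h : ∃ w, 0 < Y k gk w then h.choose else v₀) k
  have hg0 : g 0 = v₀ := rfl
  have hgs : ∀ k, g (k + 1) = if h : ∃ w, 0 < Y k (g k) w then h.choose else v₀ := fun k => rfl
  have key : ∀ k, k < m → 0 < Y k (g k) (g (k + 1)) := by
    intro k
    induction k with
    | zero =>
      intro hk
      have h1 : (∑ u, ∑ v, y (⟨0, hk⟩, u, v)) = 1 := feas_layer_sum hy 0 hk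
      have h1' : (∑ v, y (⟨0, hk⟩, v₀, v)) = 1 := by
        rw [← h1]
        symm
        rw [Finset.sum_eq_single v₀]
        · intro b _ hb
          apply Finset.sum_eq_zero; intro v _
          exact hy.2.1 (⟨0, hk⟩, b, v) (fun hE => hb (hE0 _ _ hE))
        · intro h; exact absurd (Finset.mem_univ _) h
      have hex : ∃ w, 0 < Y 0 (g 0) w := by
        by_contra hno
        push_neg at hno
        have hle : (∑ v, y (⟨0, hk⟩, v₀, v)) ≤ 0 := by
          apply Finset.sum_nonpos
          intro v _
          have := hno v
          rw [hY] at this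
          simpa [hg0, hk] using this
        linarith
      rw [hgs 0, dif_pos hex]
      exact hex.choose_spec
    | succ k ih =>
      intro hk1
      have hk : k < m := Nat.lt_of_succ_lt hk1
      have hpos := ih hk
      have hYval : Y k (g k) (g (k + 1)) = y (⟨k, hk⟩, g k, g (k + 1)) := dif_pos hk
      have hcons : (∑ u, y (⟨k, hk⟩, u, g (k + 1))) = ∑ w, y (⟨k + 1, hk1⟩, g (k + 1), w) :=
        hy.2.2.2 ⟨k, hk⟩ hk1 (g (k + 1))
      have hL : 0 < ∑ u, y (⟨k, hk⟩, u, g (k + 1)) := by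
        rw [hYval] at hpos
        exact lt_of_lt_of_le hpos
          (Finset.single_le_sum (f := fun u => y (⟨k, hk⟩, u, g (k + 1)))
            (fun u _ => hy.1 _) (Finset.mem_univ (g k)))
      have hR : 0 < ∑ w, y (⟨k + 1, hk1⟩, g (k + 1), w) := hcons ▸ hL
      have hex : ∃ w, 0 < Y (k + 1) (g (k + 1)) w := by
        by_contra hno
        push_neg at hno
        have hle : (∑ w, y (⟨k + 1, hk1⟩, g (k + 1), w)) ≤ 0 := by
          apply Finset.sum_nonpos
          intro w _
          have := hno w
          rw [hY] at this
          simpa [hk1] using this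
        linarith
      rw [hgs (k + 1), dif_pos hex]
      exact hex.choose_spec
  set t : Fin m → V := fun i : Fin m => g ((i : ℕ) + 1) with ht
  have hnode : ∀ k, nodeSeq v₀ t k = g k := by
    intro k
    cases k with
    | zero => exact nodeSeq_zero _ _
    | succ j =>
      by_cases hj : j < m
      · rw [nodeSeq_succ _ _ j hj]
      · have h1 : nodeSeq v₀ t (j + 1) = v₀ := by
          unfold nodeSeq
          rw [dif_neg (by omega)]
        have h2 : g (j + 1) = v₀ := by
          rw [hgs j, dif_neg]
          push_neg
          intro w
          simp [hY, hj]
        rw [h1, h2]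
  have hypos : ∀ i : Fin m, 0 < y (i, nodeSeq v₀ t i, nodeSeq v₀ t ((i : ℕ) + 1)) := by
    intro i
    have hk := key (i : ℕ) i.isLt
    rw [hnode, hnode]
    simpa [hY, i.isLt, Fin.eta] using hk
  refine ⟨t, fun i => ?_, hypos⟩
  by_contra hE
  have h0 := hy.2.1 (i, nodeSeq v₀ t i, nodeSeq v₀ t ((i : ℕ) + 1)) hE
  have := hypos i
  rw [h0] at this
  exact lt_irrefl 0 this

theorem feas_phi_mem (hm : 0 < m) {v₀ : V} {E : ℕ → V → V → Prop}
    (hE0 : ∀ u v, E 0 u v → u = v₀) (wt : ℕ → V → V → ι → ℝ) :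
    ∀ (N : ℕ) (y : Fin m × V × V → ℝ), y ∈ Feas v₀ E →
      (Finset.univ.filter (fun a => y a ≠ 0)).card ≤ N →
      phi wt y ∈ convexHull ℝ {x | ∃ t : Fin m → V, IsPath v₀ E t ∧ x = outVec v₀ wt t} := by
  intro N
  induction N with
  | zero =>
    intro y hy hcard
    exfalso
    have hall : ∀ a, y a = 0 := by
      intro a
      by_contra ha
      have hmem : a ∈ Finset.univ.filter (fun a => y a ≠ 0) := by simp [ha]
      have := Finset.card_pos.mpr ⟨a, hmem⟩
      omega
    have hv := hy.2.2.1
    rw [Finset.sum_eq_zero (fun a _ => by rw [hall a]; simp)] at hv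
    norm_num at hv
  | succ N ih =>
    intro y hy hcard
    obtain ⟨t, hpath, hpos⟩ := exists_pos_path hm hE0 hy
    have hne : (Finset.univ : Finset (Fin m)).Nonempty := ⟨⟨0, hm⟩, Finset.mem_univ _⟩
    set F : Fin m → ℝ := fun i => y (i, nodeSeq v₀ t i, nodeSeq v₀ t ((i : ℕ) + 1)) with hF
    set ε := Finset.univ.inf' hne F with hεdef
    have hεpos : 0 < ε := by
      rw [hεdef, Finset.lt_inf'_iff]
      exact fun i _ => hpos i
    have hεle : ∀ a, ε * pathFlow v₀ t a ≤ y a := by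
      intro a
      unfold pathFlow
      split
      · next hcond =>
        rcases hcond with ⟨h1, h2⟩
        have hle : ε ≤ F a.1 := Finset.inf'_le _ (Finset.mem_univ _)
        rw [mul_one]
        calc ε ≤ F a.1 := hle
          _ = y a := by rw [hF]; simp only []; rw [h1, h2]
      · rw [mul_zero]; exact hy.1 a
    have hpnonneg : ∀ a, 0 ≤ pathFlow v₀ t a := by
      intro a; unfold pathFlow; split <;> norm_num
    rcases lt_or_ge ε 1 with hlt | hge
    · -- ε < 1 : peel off the path and recurse
      have h1ε : (0 : ℝ) < 1 - ε := by linarith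
      set y' : Fin m × V × V → ℝ := fun a => (1 - ε)⁻¹ * (y a - ε * pathFlow v₀ t a) with hy'def
      have hp := pathFlow_mem_feas hpath hm
      have hy'mem : y' ∈ Feas v₀ E := by
        refine ⟨fun a => mul_nonneg (inv_nonneg.mpr h1ε.le) (by linarith [hεle a]),
          fun a ha => ?_, ?_, ?_⟩
        · show (1 - ε)⁻¹ * (y a - ε * pathFlow v₀ t a) = 0
          rw [hy.2.1 a ha, hp.2.1 a ha]; ring
        · have hsplit : ∀ a : Fin m × V × V, (if ((a.1 : ℕ) = 0) then y' a else 0)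
              = (1 - ε)⁻¹ * ((if ((a.1 : ℕ) = 0) then y a else 0)
                - ε * (if ((a.1 : ℕ) = 0) then pathFlow v₀ t a else 0)) := by
            intro a; rw [hy'def]; split <;> ring
          rw [Finset.sum_congr rfl (fun a _ => hsplit a), ← Finset.mul_sum,
            Finset.sum_sub_distrib, ← Finset.mul_sum, hy.2.2.1, hp.2.2.1]
          field_simp
        · intro i h v
          have l1 := hy.2.2.2 i h v
          have l2 := hp.2.2.2 i h v
          show (∑ u, (1 - ε)⁻¹ * (y (i, u, v) - ε * pathFlow v₀ t (i, u, v))) = _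
          rw [← Finset.mul_sum, ← Finset.mul_sum, Finset.sum_sub_distrib,
            Finset.sum_sub_distrib, ← Finset.mul_sum, ← Finset.mul_sum, l1, l2]
      obtain ⟨i0, _, hi0⟩ := Finset.exists_mem_eq_inf' hne F
      set a0 : Fin m × V × V := (i0, nodeSeq v₀ t i0, nodeSeq v₀ t ((i0 : ℕ) + 1)) with ha0def
      have hya0 : y a0 = F i0 := rfl
      have hpa0 : pathFlow v₀ t a0 = 1 := if_pos ⟨rfl, rfl⟩
      have hy'a0 : y' a0 = 0 := by
        show (1 - ε)⁻¹ * (y a0 - ε * pathFlow v₀ t a0) = 0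
        rw [hya0, hpa0, ← hi0]; ring
      have ha0mem : a0 ∈ Finset.univ.filter (fun a => y a ≠ 0) := by
        simp only [Finset.mem_filter, Finset.mem_univ, true_and]
        rw [hya0, ← hi0]; exact ne_of_gt hεpos
      have hsubset : Finset.univ.filter (fun a => y' a ≠ 0)
          ⊆ (Finset.univ.filter (fun a => y a ≠ 0)).erase a0 := by
        intro a ha
        simp only [Finset.mem_filter, Finset.mem_univ, true_and] at ha
        rw [Finset.mem_erase]
        constructor
        · rintro rfl; exact ha hy'a0
        · simp only [Finset.mem_filter, Finset.mem_univ, true_and]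
          intro h0
          apply ha
          have hp0 : pathFlow v₀ t a = 0 := by
            by_contra hpne
            have : ε * pathFlow v₀ t a ≤ 0 := h0 ▸ hεle a
            have h01 : pathFlow v₀ t a = 1 := by
              unfold pathFlow at hpne ⊢; split at hpne <;> simp_all
            rw [h01, mul_one] at this; linarith
          show (1 - ε)⁻¹ * (y a - ε * pathFlow v₀ t a) = 0
          rw [h0, hp0]; ring
      have hcard' : (Finset.univ.filter (fun a => y' a ≠ 0)).card ≤ N := by
        have h1 := Finset.card_le_card hsubset
        rw [Finset.card_erase_of_mem ha0mem] at h1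
        omega
      have hrec := ih y' hy'mem hcard'
      have hdecomp : y = ε • pathFlow v₀ t + (1 - ε) • y' := by
        funext a
        simp only [Pi.add_apply, Pi.smul_apply, smul_eq_mul, hy'def]
        field_simp
        ring
      have hphi : phi (m := m) wt y = ε • phi wt (pathFlow v₀ t) + (1 - ε) • phi wt y' := by
        rw [hdecomp, map_add, map_smul, map_smul]
      rw [hphi, phi_pathFlow]
      have hmem0 : outVec v₀ wt t ∈ {x | ∃ t : Fin m → V, IsPath v₀ E t ∧ x = outVec v₀ wt t} :=
        ⟨t, hpath, rfl⟩
      exact (convex_convexHull ℝ _)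
        (subset_convexHull ℝ _ hmem0) hrec hεpos.le (by linarith) (by ring)
    · -- 1 ≤ ε : y is exactly the path flow
      have hylep : ∀ a, pathFlow v₀ t a ≤ y a := by
        intro a
        calc pathFlow v₀ t a = 1 * pathFlow v₀ t a := by ring
          _ ≤ ε * pathFlow v₀ t a := mul_le_mul_of_nonneg_right hge (hpnonneg a)
          _ ≤ y a := hεle a
      have hlay1 : ∀ i : Fin m, (∑ x : V × V, y (i, x)) = 1 := by
        intro i
        rw [Fintype.sum_prod_type]
        exact feas_layer_sum hy i i.isLt
      have hlay2 : ∀ i : Fin m, (∑ x : V × V, pathFlow v₀ t (i, x)) = 1 := by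
        intro i
        rw [Fintype.sum_prod_type]
        exact pathFlow_layer_sum v₀ t i
      have htoty : (∑ a : Fin m × V × V, y a) = m := by
        rw [Fintype.sum_prod_type, Finset.sum_congr rfl (fun i _ => hlay1 i)]
        simp
      have htotp : (∑ a : Fin m × V × V, pathFlow v₀ t a) = m := by
        rw [Fintype.sum_prod_type, Finset.sum_congr rfl (fun i _ => hlay2 i)]
        simp
      have hzero : ∀ a ∈ (Finset.univ : Finset (Fin m × V × V)), y a - pathFlow v₀ t a = 0 := by
        rw [← Finset.sum_eq_zero_iff_of_nonneg (fun a _ => by linarith [hylep a])]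
        rw [Finset.sum_sub_distrib, htoty, htotp]; ring
      have hyeq : y = pathFlow v₀ t := by
        funext a
        have := hzero a (Finset.mem_univ a)
        linarith
      rw [hyeq, phi_pathFlow]
      exact subset_convexHull ℝ _ ⟨t, hpath, rfl⟩

theorem dp_image (hm : 0 < m) {v₀ : V} {E : ℕ → V → V → Prop}
    (hE0 : ∀ u v, E 0 u v → u = v₀) (wt : ℕ → V → V → ι → ℝ) :
    phi (m := m) wt '' Feas (m := m) v₀ E
      = convexHull ℝ {x | ∃ t : Fin m → V, IsPath v₀ E t ∧ x = outVec v₀ wt t} := by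
  apply Set.Subset.antisymm
  · rintro x ⟨y, hy, rfl⟩
    exact feas_phi_mem hm hE0 wt _ y hy le_rfl
  · apply convexHull_min
    · rintro x ⟨t, ht, rfl⟩
      exact ⟨pathFlow v₀ t, pathFlow_mem_feas ht hm, phi_pathFlow v₀ wt t⟩
    · exact (feas_convex v₀ E).linear_image (phi wt)

end DP

section DPEF

variable {V ι : Type} [Fintype V] [DecidableEq V] [Fintype ι] {m : ℕ}

def rowFun (E : ℕ → V → V → Prop) [∀ i u v, Decidable (E i u v)] :
    ((Fin m × V × V) ⊕ (Unit ⊕ (Fin m × V))) → (Fin m × V × V) → ℝ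
  | Sum.inl a₀ => fun a => if a = a₀ ∧ ¬ E a₀.1.1 a₀.2.1 a₀.2.2 then 1 else 0
  | Sum.inr (Sum.inl _) => fun a => if (a.1 : ℕ) = 0 then 1 else 0
  | Sum.inr (Sum.inr iv) => fun a =>
      if h : (iv.1 : ℕ) + 1 < m then
        (if a.1 = iv.1 ∧ a.2.2 = iv.2 then 1 else 0)
          - (if a.1 = ⟨(iv.1 : ℕ) + 1, h⟩ ∧ a.2.1 = iv.2 then 1 else 0)
      else 0

def rowRhs : ((Fin m × V × V) ⊕ (Unit ⊕ (Fin m × V))) → ℝ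
  | Sum.inr (Sum.inl _) => 1
  | _ => 0

lemma row_indicator_sum (y : Fin m × V × V → ℝ) (a₀ : Fin m × V × V) (C : Prop) [Decidable C] :
    (∑ a : Fin m × V × V, (if a = a₀ ∧ C then (1 : ℝ) else 0) * y a)
      = if C then y a₀ else 0 := by
  by_cases hC : C
  · simp [hC, ite_mul, Finset.sum_ite_eq']
  · simp [hC]

lemma feas_eq_rows (v₀ : V) (E : ℕ → V → V → Prop) [∀ i u v, Decidable (E i u v)] :
    {y : Fin m × V × V → ℝ | (∀ a, 0 ≤ y a) ∧
        ∀ r, (∑ a, rowFun E r a * y a) = rowRhs r} = Feas v₀ E := by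
  ext y
  simp only [Set.mem_setOf_eq]
  constructor
  · rintro ⟨h0, heq⟩
    refine ⟨h0, fun a ha => ?_, ?_, ?_⟩
    · have := heq (Sum.inl a)
      rw [show rowFun (m := m) E (Sum.inl a) = fun a' => if a' = a ∧ ¬ E a.1.1 a.2.1 a.2.2 then 1 else 0 from rfl] at this
      rw [row_indicator_sum y a _, if_pos ha] at this
      exact this
    · have := heq (Sum.inr (Sum.inl ()))
      rw [show rowRhs (m := m) (V := V) (Sum.inr (Sum.inl ())) = 1 from rfl] at this
      rw [← this]
      apply Finset.sum_congr rfl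
      intro a _
      rw [show rowFun (m := m) E (Sum.inr (Sum.inl ())) a = if (a.1 : ℕ) = 0 then 1 else 0 from rfl]
      split <;> ring
    · intro i h v
      have := heq (Sum.inr (Sum.inr (i, v)))
      rw [show rowRhs (m := m) (V := V) (Sum.inr (Sum.inr (i, v))) = 0 from rfl] at this
      rw [show rowFun (m := m) E (Sum.inr (Sum.inr (i, v))) = fun a =>
        if h : (i : ℕ) + 1 < m then
          (if a.1 = i ∧ a.2.2 = v then (1:ℝ) else 0)
            - (if a.1 = ⟨(i : ℕ) + 1, h⟩ ∧ a.2.1 = v then 1 else 0)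
        else 0 from rfl] at this
      simp only [dif_pos h] at this
      have hsplit : ∀ a : Fin m × V × V,
          ((if a.1 = i ∧ a.2.2 = v then (1:ℝ) else 0)
            - (if a.1 = ⟨(i : ℕ) + 1, h⟩ ∧ a.2.1 = v then 1 else 0)) * y a
          = (if a.1 = i ∧ a.2.2 = v then y a else 0)
            - (if a.1 = ⟨(i : ℕ) + 1, h⟩ ∧ a.2.1 = v then y a else 0) := by
        intro a; split <;> split <;> ring
      rw [Finset.sum_congr rfl (fun a _ => hsplit a), Finset.sum_sub_distrib,
        sum_arc_snd, sum_arc_fst] at this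
      linarith
  · rintro ⟨h0, hz, hval, hcons⟩
    refine ⟨h0, fun r => ?_⟩
    match r with
    | Sum.inl a =>
      rw [show rowFun (m := m) E (Sum.inl a) = fun a' => if a' = a ∧ ¬ E a.1.1 a.2.1 a.2.2 then 1 else 0 from rfl]
      rw [row_indicator_sum y a _]
      rw [show rowRhs (m := m) (V := V) (Sum.inl a) = 0 from rfl]
      split
      · next hna => exact hz a hna
      · rfl
    | Sum.inr (Sum.inl _) =>
      rw [show rowRhs (m := m) (V := V) (Sum.inr (Sum.inl _)) = 1 from rfl, ← hval]
      apply Finset.sum_congr rfl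
      intro a _
      rw [show rowFun (m := m) E (Sum.inr (Sum.inl _)) a = if (a.1 : ℕ) = 0 then 1 else 0 from rfl]
      split <;> ring
    | Sum.inr (Sum.inr iv) =>
      rw [show rowRhs (m := m) (V := V) (Sum.inr (Sum.inr iv)) = 0 from rfl]
      rw [show rowFun (m := m) E (Sum.inr (Sum.inr iv)) = fun a =>
        if h : (iv.1 : ℕ) + 1 < m then
          (if a.1 = iv.1 ∧ a.2.2 = iv.2 then (1:ℝ) else 0)
            - (if a.1 = ⟨(iv.1 : ℕ) + 1, h⟩ ∧ a.2.1 = iv.2 then 1 else 0)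
        else 0 from rfl]
      by_cases h : (iv.1 : ℕ) + 1 < m
      · simp only [dif_pos h]
        have hsplit : ∀ a : Fin m × V × V,
            ((if a.1 = iv.1 ∧ a.2.2 = iv.2 then (1:ℝ) else 0)
              - (if a.1 = ⟨(iv.1 : ℕ) + 1, h⟩ ∧ a.2.1 = iv.2 then 1 else 0)) * y a
            = (if a.1 = iv.1 ∧ a.2.2 = iv.2 then y a else 0)
              - (if a.1 = ⟨(iv.1 : ℕ) + 1, h⟩ ∧ a.2.1 = iv.2 then y a else 0) := by
          intro a; split <;> split <;> ring
        rw [Finset.sum_congr rfl (fun a _ => hsplit a), Finset.sum_sub_distrib,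
          sum_arc_snd, sum_arc_fst, hcons iv.1 h iv.2]
        ring
      · simp [dif_neg h]

theorem dp_isEF (hm : 0 < m) (v₀ : V) (E : ℕ → V → V → Prop) [∀ i u v, Decidable (E i u v)]
    (hE0 : ∀ u v, E 0 u v → u = v₀) (wt : ℕ → V → V → ι → ℝ) :
    IsEF (convexHull ℝ {x | ∃ t : Fin m → V, IsPath v₀ E t ∧ x = outVec v₀ wt t})
      (Fintype.card (Fin m × V × V)) := by
  apply isEF_card (rowFun E) rowRhs (phi wt).toAffineMap
  rw [feas_eq_rows v₀ E]
  show ⇑(phi (m := m) wt) '' Feas v₀ E = _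
  rw [dp_image hm hE0 wt]

theorem dp_isEF_ray (hm : 0 < m) (v₀ : V) (E : ℕ → V → V → Prop) [∀ i u v, Decidable (E i u v)]
    (hE0 : ∀ u v, E 0 u v → u = v₀) (wt : ℕ → V → V → ι → ℝ) (rdir : ι → ℝ) :
    IsEF {z | ∃ x ∈ convexHull ℝ {x | ∃ t : Fin m → V, IsPath v₀ E t ∧ x = outVec v₀ wt t},
        ∃ s : ℝ, 0 ≤ s ∧ z = x + s • rdir}
      (Fintype.card (Fin m × V × V) + 1) := by
  have hcard : Fintype.card ((Fin m × V × V) ⊕ Unit) = Fintype.card (Fin m × V × V) + 1 := by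
    simp
  rw [← hcard]
  set κ := (Fin m × V × V) ⊕ Unit
  set g' : ((Fin m × V × V) ⊕ (Unit ⊕ (Fin m × V))) → κ → ℝ :=
    fun r => Sum.elim (rowFun E r) (fun _ => 0) with hg'
  set π' : (κ → ℝ) →ₗ[ℝ] (ι → ℝ) :=
    (phi wt).comp (LinearMap.funLeft ℝ ℝ Sum.inl)
      + (LinearMap.proj (Sum.inr () : κ)).smulRight rdir with hπ'
  apply isEF_card g' rowRhs π'.toAffineMap
  ext z
  constructor
  · rintro ⟨y, ⟨hy0, hyeq⟩, rfl⟩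
    have hfront : (fun a => y (Sum.inl a)) ∈ Feas (m := m) v₀ E := by
      rw [← feas_eq_rows v₀ E]
      refine ⟨fun a => hy0 _, fun r => ?_⟩
      have := hyeq r
      rw [Fintype.sum_sum_type] at this
      simpa [hg'] using this
    refine ⟨phi wt (fun a => y (Sum.inl a)), ?_, y (Sum.inr ()), hy0 _, ?_⟩
    · rw [← dp_image hm hE0 wt]
      exact ⟨_, hfront, rfl⟩
    · simp [hπ', LinearMap.funLeft]
      rfl
  · rintro ⟨x, hx, s, hs, rfl⟩
    rw [← dp_image hm hE0 wt] at hx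
    obtain ⟨y, hy, rfl⟩ := hx
    rw [← feas_eq_rows v₀ E] at hy
    refine ⟨Sum.elim y (fun _ => s), ⟨?_, ?_⟩, ?_⟩
    · rintro (a | u)
      · exact hy.1 a
      · exact hs
    · intro r
      rw [Fintype.sum_sum_type]
      simpa [hg'] using hy.2 r
    · rfl

end DPEF


section Inst

variable {n m : ℕ}

def lS (p : Fin n → ℕ) (X : Finset (Fin n)) : ℕ := ∑ j ∈ X, p j

lemma xc_le_of_isEF {ι : Type} [Fintype ι] {P : Set (ι → ℝ)} {k : ℕ} (h : IsEF P k) :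
    xc P ≤ k := Nat.sInf_le h

lemma chain_mono (S : ℕ → Finset (Fin n)) (hmono : ∀ k, k + 1 ≤ m → S k ⊆ S (k + 1)) :
    ∀ a b, a ≤ b → b ≤ m → S a ⊆ S b := by
  intro a b hab hbm
  induction b with
  | zero => cases Nat.le_zero.mp hab; exact subset_rfl
  | succ b ihb =>
    rcases Nat.eq_or_lt_of_le hab with rfl | hlt
    · exact subset_rfl
    · exact subset_trans (ihb (by omega) (by omega)) (hmono b hbm)

lemma exists_sigma (hm : 0 < m) (S : ℕ → Finset (Fin n))
    (hmono : ∀ k, k + 1 ≤ m → S k ⊆ S (k + 1)) (h0 : S 0 = ∅) (hSm : S m = Finset.univ) :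
    ∃ σ : Fin n → Fin m, ∀ (j : Fin n) (k : Fin m),
      σ j = k ↔ (j ∈ S ((k : ℕ) + 1) ∧ j ∉ S (k : ℕ)) := by
  have mono := chain_mono (m := m) S hmono
  have hex : ∀ j : Fin n, ∃ k, j ∈ S (k + 1) := by
    intro j
    refine ⟨m - 1, ?_⟩
    have : m - 1 + 1 = m := by omega
    rw [this, hSm]
    exact Finset.mem_univ j
  have hfindlt : ∀ j : Fin n, Nat.find (hex j) < m := by
    intro j
    have h1 : Nat.find (hex j) ≤ m - 1 := Nat.find_le (by
      have : m - 1 + 1 = m := by omega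
      rw [this, hSm]; exact Finset.mem_univ j)
    omega
  refine ⟨fun j => ⟨Nat.find (hex j), hfindlt j⟩, fun j k => ?_⟩
  constructor
  · intro hjk
    have hkval : Nat.find (hex j) = (k : ℕ) := by
      have := congrArg (fun x : Fin m => (x : ℕ)) hjk
      simpa using this
    constructor
    · rw [← hkval]; exact Nat.find_spec (hex j)
    · rw [← hkval]
      rcases Nat.eq_zero_or_pos (Nat.find (hex j)) with hz | hp
      · rw [hz, h0]; exact Finset.notMem_empty j
      · have hmin := Nat.find_min (hex j) (m := Nat.find (hex j) - 1) (by omega)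
        have : Nat.find (hex j) - 1 + 1 = Nat.find (hex j) := by omega
        rw [this] at hmin
        exact hmin
  · rintro ⟨h1, h2⟩
    have hle : Nat.find (hex j) ≤ (k : ℕ) := Nat.find_le h1
    have hge : (k : ℕ) ≤ Nat.find (hex j) := by
      by_contra hlt
      push_neg at hlt
      have hsub : S (Nat.find (hex j) + 1) ⊆ S (k : ℕ) := mono _ _ (by omega) (by omega)
      exact h2 (hsub (Nat.find_spec (hex j)))
    refine Fin.ext ?_
    show Nat.find (hex j) = (k : ℕ)
    omega

def sigmaChain (σ : Fin n → Fin m) : ℕ → Finset (Fin n) :=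
  fun k => Finset.univ.filter (fun j => (σ j : ℕ) < k)

lemma sigmaChain_zero (σ : Fin n → Fin m) : sigmaChain σ 0 = ∅ := by
  simp [sigmaChain]

lemma sigmaChain_m (σ : Fin n → Fin m) : sigmaChain σ m = Finset.univ := by
  simp [sigmaChain, Fin.is_lt]

lemma sigmaChain_mono (σ : Fin n → Fin m) (k : ℕ) : sigmaChain σ k ⊆ sigmaChain σ (k + 1) := by
  intro j hj
  simp only [sigmaChain, Finset.mem_filter] at hj ⊢
  exact ⟨hj.1, by omega⟩

lemma sigmaChain_diff (σ : Fin n → Fin m) (k : ℕ) :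
    sigmaChain σ (k + 1) \ sigmaChain σ k = Finset.univ.filter (fun j => (σ j : ℕ) = k) := by
  ext j
  simp only [sigmaChain, Finset.mem_sdiff, Finset.mem_filter, Finset.mem_univ, true_and]
  omega

lemma load_eq_lS (p : Fin n → ℕ) (σ : Fin n → Fin m) (i : Fin m) :
    load p σ i = lS p (Finset.univ.filter (fun j => σ j = i)) := by
  unfold load lS
  rw [Finset.sum_filter]

lemma filter_val_eq (σ : Fin n → Fin m) (i : Fin m) :
    Finset.univ.filter (fun j => (σ j : ℕ) = (i : ℕ)) = Finset.univ.filter (fun j => σ j = i) := by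
  apply Finset.filter_congr
  intro j _
  simp [Fin.val_inj]

lemma sum_fin_ite (D : Fin m → Finset (Fin n)) (q : Fin m × Fin n) :
    (∑ i : Fin m, if ((q.1 : ℕ) = (i : ℕ)) ∧ q.2 ∈ D i then (1 : ℝ) else 0)
      = if q.2 ∈ D q.1 then 1 else 0 := by
  rw [Finset.sum_eq_single q.1]
  · simp
  · intro b _ hb
    rw [if_neg]
    rintro ⟨h1, _⟩
    exact hb (Fin.ext h1).symm
  · intro h; exact absurd (Finset.mem_univ _) h

end Inst


section PartOne

def E1 {n : ℕ} (p : Fin n → ℕ) (T m : ℕ) : ℕ → Finset (Fin n) → Finset (Fin n) → Prop :=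
  fun i S S' => S ⊆ S' ∧ lS p (S' \ S) ≤ T ∧ (i = m - 1 → S' = Finset.univ) ∧ (i = 0 → S = ∅)

instance {n : ℕ} (p : Fin n → ℕ) (T m : ℕ) : ∀ i u v, Decidable (E1 p T m i u v) :=
  fun i u v => by unfold E1; infer_instance

def wt1 {n : ℕ} (m : ℕ) : ℕ → Finset (Fin n) → Finset (Fin n) → (Fin m × Fin n) → ℝ :=
  fun i S S' q => if ((q.1 : ℕ) = i) ∧ q.2 ∈ S' \ S then 1 else 0

lemma outVec_wt1 {n m : ℕ} (t : Fin m → Finset (Fin n)) (σ : Fin n → Fin m)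
    (hdiff : ∀ i : Fin m, nodeSeq ∅ t ((i : ℕ) + 1) \ nodeSeq ∅ t (i : ℕ)
      = Finset.univ.filter (fun j => σ j = i)) :
    outVec ∅ (wt1 m) t = assignVec σ := by
  funext q
  show (∑ i : Fin m, wt1 m i (nodeSeq ∅ t i) (nodeSeq ∅ t ((i : ℕ) + 1)) q) = _
  unfold wt1
  have hcong : ∀ i : Fin m,
      (if ((q.1 : ℕ) = (i : ℕ)) ∧ q.2 ∈ nodeSeq ∅ t ((i : ℕ) + 1) \ nodeSeq ∅ t (i : ℕ)
        then (1:ℝ) else 0)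
      = (if ((q.1 : ℕ) = (i : ℕ)) ∧ q.2 ∈ Finset.univ.filter (fun j => σ j = i)
        then (1:ℝ) else 0) := by
    intro i; rw [hdiff i]
  rw [Finset.sum_congr rfl (fun i _ => hcong i),
    sum_fin_ite (fun i : Fin m => Finset.univ.filter (fun j => σ j = i)) q]
  simp only [Finset.mem_filter, Finset.mem_univ, true_and]
  rfl

lemma pathset_eq_one {n m : ℕ} (hm : 0 < m) (p : Fin n → ℕ) (T : ℕ) :
    {x | ∃ t : Fin m → Finset (Fin n), IsPath ∅ (E1 p T m) t ∧ x = outVec ∅ (wt1 m) t}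
      = {x : Fin m × Fin n → ℝ | ∃ σ : Fin n → Fin m,
          (∀ i, load p σ i ≤ T) ∧ x = assignVec σ} := by
  ext x
  simp only [Set.mem_setOf_eq]
  constructor
  · rintro ⟨t, hpath, rfl⟩
    set S := nodeSeq ∅ t with hSdef
    have hmono : ∀ k, k + 1 ≤ m → S k ⊆ S (k + 1) := by
      intro k hk
      exact (hpath ⟨k, by omega⟩).1
    have h0 : S 0 = ∅ := nodeSeq_zero _ _
    have hSm : S m = Finset.univ := by
      have h2 := (hpath ⟨m - 1, by omega⟩).2.2.1 rfl
      have h3 : (m - 1) + 1 = m := by omega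
      rw [← h3]
      exact h2
    obtain ⟨σ, hσ⟩ := exists_sigma hm S hmono h0 hSm
    have hdiff : ∀ i : Fin m, S ((i : ℕ) + 1) \ S (i : ℕ)
        = Finset.univ.filter (fun j => σ j = i) := by
      intro i; ext j
      simp only [Finset.mem_filter, Finset.mem_univ, true_and, Finset.mem_sdiff]
      exact (hσ j i).symm
    refine ⟨σ, fun i => ?_, outVec_wt1 t σ hdiff⟩
    rw [load_eq_lS, ← hdiff]
    exact (hpath i).2.1
  · rintro ⟨σ, hload, rfl⟩
    set t : Fin m → Finset (Fin n) := fun i => sigmaChain σ ((i : ℕ) + 1) with htdef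
    have hnode : ∀ k, k ≤ m → nodeSeq ∅ t k = sigmaChain σ k := by
      intro k hk
      cases k with
      | zero => rw [nodeSeq_zero, sigmaChain_zero]
      | succ j => rw [nodeSeq_succ _ _ j (by omega)]
    have hdiff : ∀ i : Fin m, nodeSeq ∅ t ((i : ℕ) + 1) \ nodeSeq ∅ t (i : ℕ)
        = Finset.univ.filter (fun j => σ j = i) := by
      intro i
      rw [hnode _ (by omega), hnode _ (by omega), sigmaChain_diff, filter_val_eq]
    refine ⟨t, fun i => ?_, (outVec_wt1 t σ hdiff).symm⟩
    refine ⟨?_, ?_, ?_, ?_⟩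
    · rw [hnode _ (by omega), hnode _ (by omega)]
      exact sigmaChain_mono σ _
    · rw [show nodeSeq ∅ t ((i : ℕ) + 1) \ nodeSeq ∅ t (i : ℕ)
        = Finset.univ.filter (fun j => σ j = i) from hdiff i, ← load_eq_lS]
      exact hload i
    · intro hival
      rw [hnode _ (by omega), hival]
      have h3 : (m - 1) + 1 = m := by omega
      rw [h3, sigmaChain_m]
    · intro hival0
      rw [hnode _ (by omega), hival0, sigmaChain_zero]

lemma makespan_iff {n m : ℕ} (p : Fin n → ℕ) (σ : Fin n → Fin m) :
    makespan p σ = optMakespan n m p ↔ ∀ i, load p σ i ≤ optMakespan n m p := by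
  constructor
  · intro h i; rw [← h]; exact Finset.le_sup (Finset.mem_univ i)
  · intro h
    apply le_antisymm
    · exact Finset.sup_le (fun i _ => h i)
    · exact Nat.sInf_le ⟨σ, rfl⟩

theorem partOne {n m : ℕ} (hm : 0 < m) (p : Fin n → ℕ) :
    IsEF (convexHull ℝ {x : Fin m × Fin n → ℝ | ∃ σ : Fin n → Fin m,
        makespan p σ = optMakespan n m p ∧ x = assignVec σ})
      (Fintype.card (Fin m × Finset (Fin n) × Finset (Fin n))) := by
  have h := dp_isEF (m := m) hm (∅ : Finset (Fin n)) (E1 p (optMakespan n m p) m)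
      (fun u v hE => hE.2.2.2 rfl) (wt1 m)
  rw [pathset_eq_one hm p _] at h
  have hsame : {x : Fin m × Fin n → ℝ | ∃ σ : Fin n → Fin m,
      (∀ i, load p σ i ≤ optMakespan n m p) ∧ x = assignVec σ}
      = {x : Fin m × Fin n → ℝ | ∃ σ : Fin n → Fin m,
      makespan p σ = optMakespan n m p ∧ x = assignVec σ} := by
    ext x
    simp only [Set.mem_setOf_eq]
    constructor
    · rintro ⟨σ, h1, rfl⟩; exact ⟨σ, (makespan_iff p σ).mpr h1, rfl⟩
    · rintro ⟨σ, h1, rfl⟩; exact ⟨σ, (makespan_iff p σ).mp h1, rfl⟩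
  rwa [hsame] at h

end PartOne


lemma isEF_point_ray {ι : Type} [Fintype ι] (z0 rdir : ι → ℝ) :
    IsEF {z | ∃ x ∈ convexHull ℝ ({z0} : Set (ι → ℝ)), ∃ s : ℝ, 0 ≤ s ∧ z = x + s • rdir} 1 := by
  have h1 : (1 : ℕ) = Fintype.card Unit := rfl
  rw [h1]
  have hmk : ∀ y : Unit → ℝ, (fun y : Unit → ℝ => z0 + y () • rdir) y
      = ((LinearMap.proj (R := ℝ) (φ := fun _ : Unit => ℝ) ()).smulRight rdir) (y -ᵥ 0)
        +ᵥ (fun y : Unit → ℝ => z0 + y () • rdir) (0 : Unit → ℝ) := by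
    intro y
    funext q
    simp [vsub_eq_sub, vadd_eq_add]
    ring
  apply isEF_card (L := Unit) (fun _ _ => (0 : ℝ)) (fun _ => 0)
    (AffineMap.mk' (fun y : Unit → ℝ => z0 + y () • rdir)
      ((LinearMap.proj (R := ℝ) (φ := fun _ : Unit => ℝ) ()).smulRight rdir) 0 hmk)
  ext z
  simp only [Set.mem_image, Set.mem_setOf_eq, AffineMap.coe_mk', convexHull_singleton,
    Set.mem_singleton_iff]
  constructor
  · rintro ⟨y, ⟨hy, _⟩, rfl⟩
    exact ⟨z0, rfl, y (), hy (), rfl⟩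
  · rintro ⟨x, rfl, s, hs, rfl⟩
    exact ⟨fun _ => s, ⟨fun _ => hs, fun _ => by simp⟩, rfl⟩

section PartTwo

def E2 {n : ℕ} (p : Fin n → ℕ) (m : ℕ) :
    ℕ → (Finset (Fin n) × Finset (Fin n)) → (Finset (Fin n) × Finset (Fin n)) → Prop :=
  fun i P P' => P.1 ⊆ P'.1
    ∧ P'.2 = (if lS p P.2 < lS p (P'.1 \ P.1) then P'.1 \ P.1 else P.2)
    ∧ (i = m - 1 → P'.1 = Finset.univ) ∧ (i = 0 → P = (∅, ∅))

instance {n : ℕ} (p : Fin n → ℕ) (m : ℕ) : ∀ i u v, Decidable (E2 p m i u v) :=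
  fun i u v => by unfold E2; infer_instance

def wt2 {n : ℕ} (p : Fin n → ℕ) (m : ℕ) : ℕ → (Finset (Fin n) × Finset (Fin n))
    → (Finset (Fin n) × Finset (Fin n)) → (Option (Fin m × Fin n)) → ℝ :=
  fun i P P' q => Option.elim q (if i = m - 1 then (lS p P'.2 : ℝ) else 0)
    (fun ij => if ((ij.1 : ℕ) = i) ∧ ij.2 ∈ P'.1 \ P.1 then 1 else 0)

def S0set {n : ℕ} (p : Fin n → ℕ) (m : ℕ) : Set (Option (Fin m × Fin n) → ℝ) :=
  {z | ∃ σ : Fin n → Fin m,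
    z = fun q => Option.elim q ((makespan p σ : ℕ) : ℝ) (fun ij => assignVec σ ij)}

def eT (n m : ℕ) : Option (Fin m × Fin n) → ℝ := fun q => Option.elim q 1 (fun _ => 0)

lemma lS_maxchain {n m : ℕ} (p : Fin n → ℕ) (S A : ℕ → Finset (Fin n)) (h0 : A 0 = ∅)
    (hA : ∀ k, k + 1 ≤ m →
      A (k + 1) = if lS p (A k) < lS p (S (k + 1) \ S k) then S (k + 1) \ S k else A k) :
    ∀ k, k ≤ m → lS p (A k) = (Finset.range k).sup (fun j => lS p (S (j + 1) \ S j)) := by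
  intro k
  induction k with
  | zero =>
    intro _
    rw [h0, Finset.range_zero, Finset.sup_empty]
    simp [lS]
  | succ k ih =>
    intro hk
    rw [hA k hk, Finset.range_add_one, Finset.sup_insert, ← ih (by omega)]
    split
    · next h => exact (sup_eq_left.mpr (by omega)).symm
    · next h => exact (sup_eq_right.mpr (by omega)).symm

lemma makespan_eq_sup {n m : ℕ} (p : Fin n → ℕ) (σ : Fin n → Fin m) (S : ℕ → Finset (Fin n))
    (hdiff : ∀ i : Fin m, S ((i : ℕ) + 1) \ S (i : ℕ)
      = Finset.univ.filter (fun j => σ j = i)) :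
    makespan p σ = (Finset.range m).sup (fun j => lS p (S (j + 1) \ S j)) := by
  unfold makespan
  apply le_antisymm
  · apply Finset.sup_le
    intro i _
    rw [load_eq_lS, ← hdiff i]
    exact Finset.le_sup (f := fun j => lS p (S (j + 1) \ S j)) (Finset.mem_range.mpr i.isLt)
  · apply Finset.sup_le
    intro j hj
    have hjm : j < m := Finset.mem_range.mp hj
    have : lS p (S (j + 1) \ S j) = load p σ ⟨j, hjm⟩ := by
      rw [load_eq_lS, ← hdiff ⟨j, hjm⟩]
    rw [this]
    exact Finset.le_sup (Finset.mem_univ _)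

end PartTwo


def sigmaMax {n : ℕ} (p : Fin n → ℕ) {m : ℕ} (σ : Fin n → Fin m) : ℕ → Finset (Fin n)
  | 0 => ∅
  | k + 1 => if lS p (sigmaMax p σ k) < lS p (sigmaChain σ (k + 1) \ sigmaChain σ k)
      then sigmaChain σ (k + 1) \ sigmaChain σ k else sigmaMax p σ k

section PartTwoB

lemma sum_last {m : ℕ} (hm : 0 < m) (f : Fin m → ℝ) :
    (∑ i : Fin m, if (i : ℕ) = m - 1 then f i else 0) = f ⟨m - 1, by omega⟩ := by
  rw [Finset.sum_eq_single (⟨m - 1, by omega⟩ : Fin m)]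
  · rw [if_pos rfl]
  · intro b _ hb; rw [if_neg]; intro hbv; exact hb (Fin.ext hbv)
  · intro h; exact absurd (Finset.mem_univ _) h

lemma outVec_wt2_some {n m : ℕ} (p : Fin n → ℕ)
    (t : Fin m → Finset (Fin n) × Finset (Fin n)) (σ : Fin n → Fin m)
    (hdiff : ∀ i : Fin m, (nodeSeq (∅, ∅) t ((i : ℕ) + 1)).1 \ (nodeSeq (∅, ∅) t (i : ℕ)).1
      = Finset.univ.filter (fun j => σ j = i)) (ij : Fin m × Fin n) :
    outVec (∅, ∅) (wt2 p m) t (some ij) = assignVec σ ij := by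
  show (∑ i : Fin m, if ((ij.1 : ℕ) = (i : ℕ))
      ∧ ij.2 ∈ (nodeSeq (∅, ∅) t ((i : ℕ) + 1)).1 \ (nodeSeq (∅, ∅) t (i : ℕ)).1
      then (1:ℝ) else 0) = _
  have hcong : ∀ i : Fin m,
      (if ((ij.1 : ℕ) = (i : ℕ))
        ∧ ij.2 ∈ (nodeSeq (∅, ∅) t ((i : ℕ) + 1)).1 \ (nodeSeq (∅, ∅) t (i : ℕ)).1
        then (1:ℝ) else 0)
      = (if ((ij.1 : ℕ) = (i : ℕ)) ∧ ij.2 ∈ Finset.univ.filter (fun j => σ j = i)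
        then (1:ℝ) else 0) := by
    intro i; rw [hdiff i]
  rw [Finset.sum_congr rfl (fun i _ => hcong i),
    sum_fin_ite (fun i : Fin m => Finset.univ.filter (fun j => σ j = i)) ij]
  simp only [Finset.mem_filter, Finset.mem_univ, true_and]
  rfl

lemma outVec_wt2_none {n m : ℕ} (hm : 0 < m) (p : Fin n → ℕ)
    (t : Fin m → Finset (Fin n) × Finset (Fin n)) :
    outVec (∅, ∅) (wt2 p m) t none = (lS p ((nodeSeq (∅, ∅) t m).2) : ℝ) := by
  show (∑ i : Fin m, if ((i : ℕ) = m - 1)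
      then (lS p ((nodeSeq (∅, ∅) t ((i : ℕ) + 1)).2) : ℝ) else 0) = _
  rw [sum_last hm]
  show (lS p ((nodeSeq (∅, ∅) t ((m - 1) + 1)).2) : ℝ) = _
  have h3 : m - 1 + 1 = m := by omega
  rw [h3]

lemma pathset_eq_two {n m : ℕ} (hm : 0 < m) (p : Fin n → ℕ) :
    {x | ∃ t : Fin m → Finset (Fin n) × Finset (Fin n),
        IsPath (∅, ∅) (E2 p m) t ∧ x = outVec (∅, ∅) (wt2 p m) t}
      = S0set p m := by
  have h3 : m - 1 + 1 = m := by omega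
  ext x
  simp only [Set.mem_setOf_eq, S0set]
  constructor
  · rintro ⟨t, hpath, rfl⟩
    set S : ℕ → Finset (Fin n) := fun k => (nodeSeq (∅, ∅) t k).1 with hSdef
    set A : ℕ → Finset (Fin n) := fun k => (nodeSeq (∅, ∅) t k).2 with hAdef
    have hmono : ∀ k, k + 1 ≤ m → S k ⊆ S (k + 1) := by
      intro k hk
      exact (hpath ⟨k, by omega⟩).1
    have h0 : S 0 = ∅ := by
      show (nodeSeq (∅, ∅) t 0).1 = ∅
      rw [nodeSeq_zero]
    have h0A : A 0 = ∅ := by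
      show (nodeSeq (∅, ∅) t 0).2 = ∅
      rw [nodeSeq_zero]
    have hSm : S m = Finset.univ := by
      have h2 := (hpath ⟨m - 1, by omega⟩).2.2.1 rfl
      rw [← h3]
      exact h2
    obtain ⟨σ, hσ⟩ := exists_sigma hm S hmono h0 hSm
    have hdiff : ∀ i : Fin m, S ((i : ℕ) + 1) \ S (i : ℕ)
        = Finset.univ.filter (fun j => σ j = i) := by
      intro i; ext j
      simp only [Finset.mem_filter, Finset.mem_univ, true_and, Finset.mem_sdiff]
      exact (hσ j i).symm
    have hA : ∀ k, k + 1 ≤ m →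
        A (k + 1) = if lS p (A k) < lS p (S (k + 1) \ S k) then S (k + 1) \ S k else A k := by
      intro k hk
      exact (hpath ⟨k, by omega⟩).2.1
    have hAm : lS p (A m) = makespan p σ := by
      rw [lS_maxchain p S A h0A hA m le_rfl, makespan_eq_sup p σ S hdiff]
    refine ⟨σ, ?_⟩
    funext q
    cases q with
    | none =>
      show outVec (∅, ∅) (wt2 p m) t none = _
      rw [outVec_wt2_none hm p t]
      show (lS p (A m) : ℝ) = _
      rw [hAm]
      rfl
    | some ij =>
      exact outVec_wt2_some p t σ hdiff ij
  · rintro ⟨σ, rfl⟩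
    set t : Fin m → Finset (Fin n) × Finset (Fin n) :=
      fun i => (sigmaChain σ ((i : ℕ) + 1), sigmaMax p σ ((i : ℕ) + 1)) with htdef
    have hnode : ∀ k, k ≤ m →
        nodeSeq (∅, ∅) t k = (sigmaChain σ k, sigmaMax p σ k) := by
      intro k hk
      cases k with
      | zero => rw [nodeSeq_zero, sigmaChain_zero]; rfl
      | succ j => rw [nodeSeq_succ _ _ j (by omega)]
    have hdiff : ∀ i : Fin m, (nodeSeq (∅, ∅) t ((i : ℕ) + 1)).1 \ (nodeSeq (∅, ∅) t (i : ℕ)).1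
        = Finset.univ.filter (fun j => σ j = i) := by
      intro i
      rw [hnode _ (by omega), hnode _ (by omega)]
      show sigmaChain σ ((i : ℕ) + 1) \ sigmaChain σ (i : ℕ) = _
      rw [sigmaChain_diff, filter_val_eq]
    refine ⟨t, ?_, ?_⟩
    · intro i
      refine ⟨?_, ?_, ?_, ?_⟩
      · rw [hnode _ (by omega), hnode _ (by omega)]
        exact sigmaChain_mono σ _
      · rw [hnode _ (by omega), hnode _ (by omega)]
        rfl
      · intro hival
        rw [hnode _ (by omega)]
        show sigmaChain σ ((i : ℕ) + 1) = _
        rw [hival, h3, sigmaChain_m]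
      · intro hival0
        rw [hnode _ (by omega), hival0, sigmaChain_zero]
        rfl
    · funext q
      cases q with
      | none =>
        rw [outVec_wt2_none hm p t, hnode _ le_rfl]
        show (makespan p σ : ℝ) = (lS p (sigmaMax p σ m) : ℝ)
        have hA : ∀ k, k + 1 ≤ m → sigmaMax p σ (k + 1)
            = if lS p (sigmaMax p σ k) < lS p (sigmaChain σ (k + 1) \ sigmaChain σ k)
              then sigmaChain σ (k + 1) \ sigmaChain σ k else sigmaMax p σ k := by
          intro k _; rfl
        have hdiff2 : ∀ i : Fin m, sigmaChain σ ((i : ℕ) + 1) \ sigmaChain σ (i : ℕ)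
            = Finset.univ.filter (fun j => σ j = i) := by
          intro i; rw [sigmaChain_diff, filter_val_eq]
        rw [lS_maxchain p (sigmaChain σ) (sigmaMax p σ) rfl hA m le_rfl,
          makespan_eq_sup p σ (sigmaChain σ) hdiff2]
      | some ij =>
        exact (outVec_wt2_some p t σ hdiff ij).symm

end PartTwoB


section PpolyEq

lemma makespan_le_iff {n m : ℕ} (p : Fin n → ℕ) (σ : Fin n → Fin m) (t : ℕ) :
    (∀ i, load p σ i ≤ t) ↔ makespan p σ ≤ t := by
  constructor
  · intro h; exact Finset.sup_le (fun i _ => h i)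
  · intro h i; exact le_trans (Finset.le_sup (Finset.mem_univ i)) h

lemma gen_mem_ppoly {n m : ℕ} (p : Fin n → ℕ) (σ : Fin n → Fin m) (r : ℝ)
    (hr : (makespan p σ : ℝ) ≤ r) :
    (fun q => Option.elim q r (fun ij => assignVec σ ij)) ∈ Ppoly n m p := by
  have hr0 : (0 : ℝ) ≤ r := le_trans (by positivity) hr
  set k := ⌊r⌋₊ with hk
  have hkr : (k : ℝ) ≤ r := Nat.floor_le hr0
  have hrk1 : r < (k : ℝ) + 1 := by
    have := Nat.lt_floor_add_one r
    push_cast at this ⊢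
    exact this
  have hMk : makespan p σ ≤ k := Nat.le_floor hr
  set a := r - (k : ℝ) with ha
  have ha0 : 0 ≤ a := by simp [ha]; linarith
  have ha1 : a ≤ 1 := by simp [ha]; linarith
  have hz1 : (fun q => Option.elim q ((k : ℕ) : ℝ) (fun ij => assignVec σ ij)) ∈
      {z : Option (Fin m × Fin n) → ℝ | ∃ (σ' : Fin n → Fin m) (t : ℕ),
        (∀ i, load p σ' i ≤ t) ∧
        z = fun q => Option.elim q (t : ℝ) (fun ij => assignVec σ' ij)} :=
    ⟨σ, k, (makespan_le_iff p σ k).mpr hMk, rfl⟩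
  have hz2 : (fun q => Option.elim q (((k + 1 : ℕ)) : ℝ) (fun ij => assignVec σ ij)) ∈
      {z : Option (Fin m × Fin n) → ℝ | ∃ (σ' : Fin n → Fin m) (t : ℕ),
        (∀ i, load p σ' i ≤ t) ∧
        z = fun q => Option.elim q (t : ℝ) (fun ij => assignVec σ' ij)} :=
    ⟨σ, k + 1, (makespan_le_iff p σ _).mpr (by omega), rfl⟩
  have hcomb : (fun q => Option.elim q r (fun ij => assignVec σ ij))
      = (1 - a) • (fun q => Option.elim q ((k : ℕ) : ℝ) (fun ij => assignVec σ ij))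
        + a • (fun q => Option.elim q (((k + 1 : ℕ)) : ℝ) (fun ij => assignVec σ ij)) := by
    funext q
    cases q with
    | none =>
      show r = (1 - a) * (k : ℝ) + a * ((k : ℕ) + 1 : ℕ)
      push_cast
      rw [ha]
      ring
    | some ij =>
      show assignVec σ ij = (1 - a) * assignVec σ ij + a * assignVec σ ij
      ring
  rw [hcomb]
  unfold Ppoly
  exact (convex_convexHull ℝ _)
    (subset_convexHull ℝ _ hz1) (subset_convexHull ℝ _ hz2) (by linarith) ha0 (by ring)

lemma ppoly_eq {n m : ℕ} (hm : 0 < m) (p : Fin n → ℕ) :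
    Ppoly n m p = {z | ∃ x ∈ convexHull ℝ (S0set p m), ∃ s : ℝ, 0 ≤ s ∧ z = x + s • eT n m} := by
  apply Set.Subset.antisymm
  · unfold Ppoly
    apply convexHull_min
    · rintro z ⟨σ, t, hload, rfl⟩
      have hMt : makespan p σ ≤ t := (makespan_le_iff p σ t).mp hload
      refine ⟨fun q => Option.elim q ((makespan p σ : ℕ) : ℝ) (fun ij => assignVec σ ij),
        subset_convexHull ℝ _ ⟨σ, rfl⟩, (t : ℝ) - (makespan p σ : ℝ), by
          have : ((makespan p σ : ℕ) : ℝ) ≤ (t : ℝ) := by exact_mod_cast hMt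
          linarith, ?_⟩
      funext q
      cases q with
      | none =>
        show (t : ℝ) = (makespan p σ : ℝ) + ((t : ℝ) - (makespan p σ : ℝ)) * 1
        ring
      | some ij =>
        show assignVec σ ij = assignVec σ ij + ((t : ℝ) - (makespan p σ : ℝ)) * 0
        ring
    · rintro z1 ⟨x1, hx1, s1, hs1, rfl⟩ z2 ⟨x2, hx2, s2, hs2, rfl⟩ a b ha hb hab
      refine ⟨a • x1 + b • x2, (convex_convexHull ℝ _) hx1 hx2 ha hb hab,
        a * s1 + b * s2, by positivity, ?_⟩
      funext q
      simp only [Pi.add_apply, Pi.smul_apply, smul_eq_mul]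
      ring
  · rintro z ⟨x, hx, s, hs, rfl⟩
    have hW : convexHull ℝ (S0set p m)
        ⊆ {x | ∀ s : ℝ, 0 ≤ s → x + s • eT n m ∈ Ppoly n m p} := by
      apply convexHull_min
      · rintro z0 ⟨σ, rfl⟩
        intro s hs
        have hgen := gen_mem_ppoly p σ ((makespan p σ : ℝ) + s) (by linarith)
        have heq : (fun q => Option.elim q ((makespan p σ : ℝ) + s)
            (fun ij => assignVec σ ij))
            = (fun q => Option.elim q ((makespan p σ : ℕ) : ℝ) (fun ij => assignVec σ ij))
              + s • eT n m := by
          funext q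
          cases q with
          | none => show (makespan p σ : ℝ) + s = (makespan p σ : ℝ) + s * 1; ring
          | some ij => show assignVec σ ij = assignVec σ ij + s * 0; ring
        rw [← heq]
        exact hgen
      · rintro z1 h1 z2 h2 a b ha hb hab
        intro s hs
        have hcx : Convex ℝ (Ppoly n m p) := by unfold Ppoly; exact convex_convexHull ℝ _
        have := hcx (h1 s hs) (h2 s hs) ha hb hab
        have heq : (a • z1 + b • z2) + s • eT n m
            = a • (z1 + s • eT n m) + b • (z2 + s • eT n m) := by
          funext q
          simp only [Pi.add_apply, Pi.smul_apply, smul_eq_mul]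
          linear_combination (-(s * eT n m q)) * hab
        rw [heq]
        exact this
    exact hW hx s hs

end PpolyEq


/-- Upper bound: for every instance of `P||C_max`, the convex hull of the assignment
vectors of all optimal schedules, as well as `P(J,M)`, has extension complexity at most
`2^(c·n)·m`. -/
theorem xc_upper_bound :
    ∃ c : ℕ, ∀ (n m : ℕ) (p : Fin n → ℕ), 1 ≤ m → (∀ j, 1 ≤ p j) →
      xc (convexHull ℝ {x : Fin m × Fin n → ℝ | ∃ σ : Fin n → Fin m,
          makespan p σ = optMakespan n m p ∧ x = assignVec σ}) ≤ 2 ^ (c * n) * m ∧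
      xc (Ppoly n m p) ≤ 2 ^ (c * n) * m := by
  refine ⟨5, fun n m p hm hp => ?_⟩
  constructor
  · -- part (i)
    have h1 := partOne (n := n) (m := m) hm p
    have hcard1 : Fintype.card (Fin m × Finset (Fin n) × Finset (Fin n))
        = m * (2 ^ n * 2 ^ n) := by simp
    have hb : m * (2 ^ n * 2 ^ n) ≤ 2 ^ (5 * n) * m := by
      have e1 : 2 ^ n * 2 ^ n = 2 ^ (n + n) := by rw [← pow_add]
      have e2 : (2 : ℕ) ^ (n + n) ≤ 2 ^ (5 * n) :=
        Nat.pow_le_pow_right (by norm_num) (by omega)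
      calc m * (2 ^ n * 2 ^ n) = (2 ^ n * 2 ^ n) * m := by ring
        _ ≤ 2 ^ (5 * n) * m := Nat.mul_le_mul_right m (e1 ▸ e2)
    rw [hcard1] at h1
    exact le_trans (xc_le_of_isEF h1) hb
  · -- part (ii)
    by_cases hn : n = 0
    · subst hn
      set σ₀ : Fin 0 → Fin m := fun j => j.elim0 with hσ₀
      set z0 : Option (Fin m × Fin 0) → ℝ :=
        fun q => Option.elim q ((makespan p σ₀ : ℕ) : ℝ) (fun ij => assignVec σ₀ ij) with hz0
      have hS0 : S0set p m = ({z0} : Set (Option (Fin m × Fin 0) → ℝ)) := by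
        ext z
        simp only [S0set, Set.mem_setOf_eq, Set.mem_singleton_iff]
        constructor
        · rintro ⟨σ, rfl⟩
          have : σ = σ₀ := funext fun j => j.elim0
          rw [this]
        · rintro rfl
          exact ⟨σ₀, rfl⟩
      rw [ppoly_eq hm p, hS0]
      refine le_trans (xc_le_of_isEF (isEF_point_ray z0 (eT 0 m))) ?_
      simpa using hm
    · have hn1 : 1 ≤ n := by omega
      have h2 := dp_isEF_ray (m := m) hm ((∅, ∅) : Finset (Fin n) × Finset (Fin n))
        (E2 p m) (fun u v hE => hE.2.2.2 rfl) (wt2 p m) (eT n m)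
      rw [pathset_eq_two hm p] at h2
      rw [← ppoly_eq hm p] at h2
      have hcard2 : Fintype.card (Fin m × (Finset (Fin n) × Finset (Fin n))
          × (Finset (Fin n) × Finset (Fin n))) = m * (2 ^ (4 * n)) := by
        have hc : Fintype.card (Fin m × (Finset (Fin n) × Finset (Fin n))
            × (Finset (Fin n) × Finset (Fin n))) = m * ((2 ^ n * 2 ^ n) * (2 ^ n * 2 ^ n)) := by
          simp
        rw [hc]
        congr 1
        rw [← pow_add, ← pow_add]
        congr 1
        omega

      rw [hcard2] at h2
      have hb : m * 2 ^ (4 * n) + 1 ≤ 2 ^ (5 * n) * m := by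
        have h1le : 1 ≤ m * 2 ^ (4 * n) := by
          have := Nat.mul_le_mul hm (Nat.one_le_two_pow (n := 4 * n))
          simpa using this
        have e3 : (2 : ℕ) ^ (4 * n + 1) ≤ 2 ^ (5 * n) :=
          Nat.pow_le_pow_right (by norm_num) (by omega)
        calc m * 2 ^ (4 * n) + 1 ≤ m * 2 ^ (4 * n) + m * 2 ^ (4 * n) := by omega
          _ = m * 2 ^ (4 * n + 1) := by ring
          _ ≤ m * 2 ^ (5 * n) := Nat.mul_le_mul_left m e3
          _ = 2 ^ (5 * n) * m := by ring
      exact le_trans (xc_le_of_isEF h2) hb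
end
end

section
/- There exists a constant c such that the following holds. Let (J,M) be an instance of R||C_max with n ≥ 2 jobs and m machines and processing times p_{ij} ∈ ℕ ∪ {∞}, and suppose there is at least one schedule of finite makespan; let opt be the minimum makespan over all schedules. Then there exists a polytope Q̄ ⊆ Q(J,M) such that: (i) every extreme point of Q̄ is the assignment vector x^σ of a schedule σ with makespan at most H_n · opt, where H_n = ∑_{ℓ=1}^n 1/ℓ; (ii) x^σ ∈ Q̄ for every schedule σ of makespan opt; and (iii) xc(Q̄) ≤ c·n²·m. -/
open Finset

noncomputable section

open scoped ENNReal

/-- The load of machine `i` under schedule `σ` for unrelated machines,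
with processing times in `ℕ ∪ {∞}`. -/
def Rload {n m : ℕ} (p : Fin m → Fin n → ℕ∞) (σ : Fin n → Fin m) (i : Fin m) : ℕ∞ :=
  ∑ j, if σ j = i then p i j else 0

/-- The makespan of a schedule on unrelated machines. -/
def Rmakespan {n m : ℕ} (p : Fin m → Fin n → ℕ∞) (σ : Fin n → Fin m) : ℕ∞ :=
  Finset.univ.sup (Rload p σ)

/-- The optimal makespan on unrelated machines. -/
noncomputable def Ropt (n m : ℕ) (p : Fin m → Fin n → ℕ∞) : ℕ∞ :=
  sInf {t | ∃ σ : Fin n → Fin m, Rmakespan p σ = t}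

-- ==================== Auxiliary development ====================

open scoped Classical

section Aux

variable {n m : ℕ}

/-- Slot `(i,j,k)` is allowed: `(k+1) · p i j ≤ t`. -/
def SlotOK (p : Fin m → Fin n → ℕ∞) (t : ℕ∞) (i : Fin m) (j : Fin n) (k : Fin n) : Prop :=
  (((k : ℕ) : ℕ∞) + 1) * p i j ≤ t

/-- A schedule is good if its jobs can be put into rounds, at most one job per machine per
round, with a job in round `k` (0-indexed) having processing time at most `t/(k+1)`. -/
def Good (p : Fin m → Fin n → ℕ∞) (t : ℕ∞) (σ : Fin n → Fin m) : Prop :=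
  ∃ r : Fin n → Fin n,
    (∀ j, SlotOK p t (σ j) j (r j)) ∧
    ∀ j j', σ j = σ j' → r j = r j' → j = j'

def GoodSet (p : Fin m → Fin n → ℕ∞) (t : ℕ∞) : Set (Fin m × Fin n → ℝ) :=
  {x | ∃ σ, Good p t σ ∧ x = assignVec σ}

/-- The slot polytope. -/
def Zset (p : Fin m → Fin n → ℕ∞) (t : ℕ∞) : Set (Fin m × Fin n × Fin n → ℝ) :=
  {z | (∀ s, 0 ≤ z s) ∧ (∀ i k, ∑ j, z (i, j, k) ≤ 1) ∧
       (∀ j, ∑ i, ∑ k, z (i, j, k) = 1) ∧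
       ∀ i j k, ¬ SlotOK p t i j k → z (i, j, k) = 0}

/-- Projection from slot space to assignment space. -/
def projL (n m : ℕ) : (Fin m × Fin n × Fin n → ℝ) →ₗ[ℝ] (Fin m × Fin n → ℝ) where
  toFun z := fun q => ∑ k, z (q.1, q.2, k)
  map_add' z w := by funext q; simp [Finset.sum_add_distrib]
  map_smul' c z := by funext q; simp [Finset.mul_sum]

theorem good_makespan (p : Fin m → Fin n → ℕ∞) (t : ℕ∞) (σ : Fin n → Fin m)
    (hm : 0 < m) (h : Good p t σ) :
    (Rmakespan p σ : ℝ≥0∞) ≤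
      (∑ ℓ ∈ Finset.range n, (1 : ℝ≥0∞) / ((ℓ : ℝ≥0∞) + 1)) * (t : ℝ≥0∞) := by
  obtain ⟨r, hok, hinj⟩ := h
  obtain ⟨i, -, hi⟩ := Finset.exists_mem_eq_sup (univ : Finset (Fin m))
    ⟨⟨0, hm⟩, mem_univ _⟩ (Rload p σ)
  rw [Rmakespan, hi]
  have hcast : (Rload p σ i : ℝ≥0∞) = ∑ j ∈ univ.filter (fun j => σ j = i), (p i j : ℝ≥0∞) := by
    have h0 : (Rload p σ i : ℝ≥0∞) = ∑ j, ((if σ j = i then p i j else 0 : ℕ∞) : ℝ≥0∞) :=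
      map_sum ENat.toENNRealRingHom _ _
    rw [h0, Finset.sum_filter]
    congr 1; funext j
    by_cases hj : σ j = i <;> simp [hj]
  rw [hcast]
  have step1 : ∑ j ∈ univ.filter (fun j => σ j = i), (p i j : ℝ≥0∞) ≤
      ∑ j ∈ univ.filter (fun j => σ j = i), (t : ℝ≥0∞) / (((r j : ℕ) : ℝ≥0∞) + 1) := by
    refine Finset.sum_le_sum ?_
    intro j hj
    rw [mem_filter] at hj
    have hj' := hok j
    rw [hj.2] at hj'
    rw [ENNReal.le_div_iff_mul_le (Or.inl (one_pos.trans_le le_add_self).ne') (Or.inl (by simp))]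
    have := ENat.toENNReal_le.2 hj'
    rw [ENat.toENNReal_mul] at this
    push_cast at this ⊢
    calc (p i j : ℝ≥0∞) * (((r j : ℕ) : ℝ≥0∞) + 1)
        = (((r j : ℕ) : ℝ≥0∞) + 1) * (p i j : ℝ≥0∞) := by ring
      _ ≤ _ := by exact_mod_cast this
  refine step1.trans ?_
  have hio : Set.InjOn r (univ.filter (fun j => σ j = i)) := by
    intro a ha b hb hab
    rw [coe_filter] at ha hb
    exact hinj a b (ha.2.trans hb.2.symm) hab
  have hinj' : ∀ x ∈ univ.filter (fun j => σ j = i), ∀ y ∈ univ.filter (fun j => σ j = i),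
      r x = r y → x = y := by
    intro x hx y hy hxy
    rw [mem_filter] at hx hy
    exact hinj x y (hx.2.trans hy.2.symm) hxy
  have himg : ∑ j ∈ univ.filter (fun j => σ j = i), (t:ℝ≥0∞)/(((r j:ℕ):ℝ≥0∞)+1)
      = ∑ k ∈ (univ.filter (fun j => σ j = i)).image r, (t:ℝ≥0∞)/(((k:ℕ):ℝ≥0∞)+1) :=
    (Finset.sum_image (s := univ.filter (fun j => σ j = i)) (g := r)
      (f := fun k : Fin n => (t:ℝ≥0∞)/(((k:ℕ):ℝ≥0∞)+1)) hinj').symm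
  rw [himg]
  refine le_trans (Finset.sum_le_sum_of_subset (Finset.subset_univ _)) ?_
  rw [show (∑ k : Fin n, (t : ℝ≥0∞) / (((k : ℕ) : ℝ≥0∞) + 1)) =
      ∑ ℓ ∈ Finset.range n, (t : ℝ≥0∞) / ((ℓ : ℝ≥0∞) + 1) from
    Fin.sum_univ_eq_sum_range (fun ℓ : ℕ => (t : ℝ≥0∞) / ((ℓ : ℝ≥0∞) + 1)) n]
  rw [Finset.sum_mul]
  refine le_of_eq (Finset.sum_congr rfl ?_)
  intro ℓ _
  rw [ENNReal.div_eq_inv_mul, one_div, mul_comm]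

theorem optimal_good (p : Fin m → Fin n → ℕ∞) (t : ℕ∞) (σ : Fin n → Fin m)
    (hn : 0 < n) (h : Rmakespan p σ ≤ t) : Good p t σ := by
  classical
  -- `Rel j' j` : job `j'` comes strictly before `j` on the common machine of `j` and `j'`
  set Rel : Fin n → Fin n → Prop := fun j' j =>
    p (σ j) j < p (σ j) j' ∨ (p (σ j) j' = p (σ j) j ∧ (j' : ℕ) < (j : ℕ)) with hRel
  set rank : Fin n → ℕ := fun j => (univ.filter (fun j' => σ j' = σ j ∧ Rel j' j)).card
    with hrank
  have hirr : ∀ a : Fin n, ¬ Rel a a := by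
    intro a hcon
    simp only [hRel] at hcon
    rcases hcon with h1 | h1
    · exact lt_irrefl _ h1
    · omega
  have hrank_lt : ∀ j, rank j < n := by
    intro j
    have hsub : univ.filter (fun j' => σ j' = σ j ∧ Rel j' j) ⊆ univ.erase j := by
      intro a ha
      rw [mem_filter] at ha
      rw [mem_erase]
      refine ⟨?_, mem_univ _⟩
      rintro rfl
      exact hirr _ ha.2.2
    calc rank j ≤ (univ.erase j).card := Finset.card_le_card hsub
      _ < n := by rw [Finset.card_erase_of_mem (mem_univ _), Finset.card_univ]; simp; omega
  refine ⟨fun j => ⟨rank j, hrank_lt j⟩, ?_, ?_⟩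
  · -- feasibility
    intro j
    unfold SlotOK
    simp only
    set F := univ.filter (fun j' => σ j' = σ j ∧ (Rel j' j ∨ j' = j)) with hF
    have hjF : j ∈ F := by simp [hF]
    have hcard : F.card = rank j + 1 := by
      have : F = insert j (univ.filter (fun j' => σ j' = σ j ∧ Rel j' j)) := by
        ext a
        simp only [hF, mem_insert, mem_filter, mem_univ, true_and]
        constructor
        · rintro ⟨h1, h2 | h2⟩
          · exact Or.inr ⟨h1, h2⟩
          · exact Or.inl h2
        · rintro (rfl | ⟨h1, h2⟩)
          · exact ⟨rfl, Or.inr rfl⟩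
          · exact ⟨h1, Or.inl h2⟩
      have hnotmem : j ∉ univ.filter (fun j' => σ j' = σ j ∧ Rel j' j) := by
        intro hmem
        rw [mem_filter] at hmem
        exact hirr j hmem.2.2
      rw [this, Finset.card_insert_of_notMem hnotmem]
    have hge : ∀ j' ∈ F, p (σ j) j ≤ p (σ j) j' := by
      intro j' hj'
      rw [hF, mem_filter] at hj'
      rcases hj'.2.2 with h1 | rfl
      · rcases h1 with h1 | h1
        · exact h1.le
        · exact h1.1.ge
      · exact le_refl _
    have hsmul : F.card • p (σ j) j ≤ ∑ j' ∈ F, p (σ j) j' := Finset.card_nsmul_le_sum F _ _ hge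
    have hsum : ∑ j' ∈ F, p (σ j) j' ≤ Rload p σ (σ j) := by
      rw [Rload, ← Finset.sum_filter_add_sum_filter_not univ (fun j' => σ j' = σ j)]
      have e1 : ∑ j' ∈ F, p (σ j) j' ≤ ∑ j' ∈ univ.filter (fun j' => σ j' = σ j), p (σ j) j' := by
        refine Finset.sum_le_sum_of_subset ?_
        intro a ha
        rw [hF, mem_filter] at ha
        rw [mem_filter]
        exact ⟨mem_univ _, ha.2.1⟩
      refine le_trans e1 (le_trans (le_of_eq ?_) le_self_add)
      refine Finset.sum_congr rfl ?_
      intro a ha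
      rw [mem_filter] at ha
      rw [if_pos ha.2]
    have hload : Rload p σ (σ j) ≤ t := le_trans (Finset.le_sup (mem_univ _)) h
    calc ((rank j : ℕ∞) + 1) * p (σ j) j = ((rank j + 1 : ℕ) : ℕ∞) * p (σ j) j := by push_cast; ring
      _ = (rank j + 1) • p (σ j) j := by rw [nsmul_eq_mul]
      _ = F.card • p (σ j) j := by rw [hcard]
      _ ≤ _ := le_trans hsmul (le_trans hsum hload)
  · -- injectivity
    intro j1 j2 hσ hr
    by_contra hne
    have key : ∀ a b : Fin n, σ a = σ b → Rel a b → rank a < rank b := by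
      intro a b hab hRab
      refine Finset.card_lt_card ?_
      rw [Finset.ssubset_iff_of_subset]
      · refine ⟨a, by simp [hab, hRab], ?_⟩
        intro hmem
        rw [mem_filter] at hmem
        exact hirr a hmem.2.2
      · intro c hc
        rw [mem_filter] at hc
        rw [mem_filter]
        refine ⟨mem_univ _, hc.2.1.trans hab, ?_⟩
        -- transitivity: Rel c a → Rel a b → Rel c b
        have hca := hc.2.2
        simp only [hRel] at hca hRab ⊢
        rw [hab] at hca
        rcases hca with h1 | h1 <;> rcases hRab with h2 | h2
        · exact Or.inl (h2.trans h1)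
        · exact Or.inl (h2.1 ▸ h1)
        · exact Or.inl (h1.1 ▸ h2)
        · exact Or.inr ⟨h1.1.trans h2.1, h1.2.trans h2.2⟩
    have htri : Rel j1 j2 ∨ Rel j2 j1 := by
      simp only [hRel]
      rw [hσ]
      rcases lt_trichotomy (p (σ j2) j1) (p (σ j2) j2) with h1 | h1 | h1
      · right; left; exact h1
      · have hne2 : (j1 : ℕ) ≠ (j2 : ℕ) := fun hc => hne (Fin.ext hc)
        rcases Nat.lt_or_ge (j1 : ℕ) (j2 : ℕ) with h2 | h2
        · left; right; exact ⟨h1, h2⟩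
        · right; right; exact ⟨h1.symm, by omega⟩
      · left; left; exact h1
    have : rank j1 = rank j2 := by
      have := congrArg Fin.val hr
      simpa using this
    rcases htri with h1 | h1
    · exact absurd this (Nat.ne_of_lt (key j1 j2 hσ h1))
    · exact absurd this.symm (Nat.ne_of_lt (key j2 j1 hσ.symm h1))

theorem goodSet_sub (p : Fin m → Fin n → ℕ∞) (t : ℕ∞) :
    GoodSet p t ⊆ projL n m '' Zset p t := by
  rintro x ⟨σ, ⟨r, hok, hinj⟩, rfl⟩
  refine ⟨fun s => if σ s.2.1 = s.1 ∧ r s.2.1 = s.2.2 then 1 else 0, ⟨?_, ?_, ?_, ?_⟩, ?_⟩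
  · intro s; positivity
  · intro i k
    rw [Finset.sum_boole]
    have hle : (univ.filter (fun j => σ j = i ∧ r j = k)).card ≤ 1 := by
      refine Finset.card_le_one.2 ?_
      intro a ha b hb
      rw [mem_filter] at ha hb
      exact hinj a b (ha.2.1.trans hb.2.1.symm) (ha.2.2.trans hb.2.2.symm)
    exact_mod_cast hle
  · intro j
    show (∑ i : Fin m, ∑ k : Fin n, if σ j = i ∧ r j = k then (1:ℝ) else 0) = 1
    have key : ∀ x : Fin m, ∀ x1 : Fin n, (if σ j = x ∧ r j = x1 then (1:ℝ) else 0)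
        = (if σ j = x then (1:ℝ) else 0) * (if r j = x1 then (1:ℝ) else 0) := by
      intro x x1
      by_cases h1 : σ j = x <;> by_cases h2 : r j = x1 <;> simp [h1, h2]
    simp only [key]
    rw [← Finset.sum_mul_sum]
    simp [Finset.sum_ite_eq]
  · intro i j k hbad
    show (if σ j = i ∧ r j = k then (1:ℝ) else 0) = 0
    rw [if_neg]
    rintro ⟨h1, h2⟩
    rw [← h1, ← h2] at hbad
    exact hbad (hok j)
  · funext q
    show (∑ k : Fin n, if σ q.2 = q.1 ∧ r q.2 = k then (1:ℝ) else 0) = _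
    rw [assignVec]
    by_cases h1 : σ q.2 = q.1
    · simp [h1, Finset.sum_ite_eq]
    · simp [h1]

theorem zset_convex (p : Fin m → Fin n → ℕ∞) (t : ℕ∞) : Convex ℝ (Zset p t) := by
  intro z1 hz1 z2 hz2 a b ha hb hab
  obtain ⟨h10, h1c, h1j, h1f⟩ := hz1
  obtain ⟨h20, h2c, h2j, h2f⟩ := hz2
  refine ⟨?_, ?_, ?_, ?_⟩
  · intro s
    have : (a • z1 + b • z2) s = a * z1 s + b * z2 s := rfl
    rw [this]
    have := h10 s; have := h20 s
    positivity
  · intro i k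
    have he : ∀ s, (a • z1 + b • z2) s = a * z1 s + b * z2 s := fun _ => rfl
    simp only [he]
    rw [Finset.sum_add_distrib, ← Finset.mul_sum, ← Finset.mul_sum]
    calc a * (∑ j, z1 (i,j,k)) + b * (∑ j, z2 (i,j,k)) ≤ a * 1 + b * 1 := by
          gcongr
          exacts [h1c i k, h2c i k]
      _ = 1 := by rw [mul_one, mul_one, hab]
  · intro j
    have he : ∀ s, (a • z1 + b • z2) s = a * z1 s + b * z2 s := fun _ => rfl
    simp only [he]
    rw [show (∑ i, ∑ k, (a * z1 (i,j,k) + b * z2 (i,j,k)))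
        = a * (∑ i, ∑ k, z1 (i,j,k)) + b * (∑ i, ∑ k, z2 (i,j,k)) by
      rw [Finset.mul_sum, Finset.mul_sum, ← Finset.sum_add_distrib]
      refine Finset.sum_congr rfl fun i _ => ?_
      rw [Finset.mul_sum, Finset.mul_sum, ← Finset.sum_add_distrib]]
    rw [h1j j, h2j j, mul_one, mul_one, hab]
  · intro i j k hbad
    have he : (a • z1 + b • z2) (i,j,k) = a * z1 (i,j,k) + b * z2 (i,j,k) := rfl
    rw [he, h1f i j k hbad, h2f i j k hbad, mul_zero, mul_zero, add_zero]

theorem zset_sub (p : Fin m → Fin n → ℕ∞) (t : ℕ∞)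
    (hex : ∃ σ0 : Fin n → Fin m, Good p t σ0)
    {z : Fin m × Fin n × Fin n → ℝ} (hz : z ∈ Zset p t) :
    projL n m z ∈ convexHull ℝ (GoodSet p t) := by
  classical
  obtain ⟨hz0, hzc, hzj, hzf⟩ := hz
  set M : Matrix ((Fin n) ⊕ (Fin m × Fin n)) ((Fin n) ⊕ (Fin m × Fin n)) ℝ := fun a b =>
    match a, b with
    | .inl _, .inl _ => 0
    | .inl j, .inr ik => z (ik.1, j, ik.2)
    | .inr ik, .inl j => z (ik.1, j, ik.2)
    | .inr ik, .inr ik' => if ik = ik' then 1 - ∑ j, z (ik.1, j, ik.2) else 0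
    with hM
  have hMds : M ∈ doublyStochastic ℝ ((Fin n) ⊕ (Fin m × Fin n)) := by
    rw [mem_doublyStochastic_iff_sum]
    refine ⟨?_, ?_, ?_⟩
    · rintro (j | ik) (j' | ik')
      · exact le_refl 0
      · exact hz0 _
      · exact hz0 _
      · show (0:ℝ) ≤ if ik = ik' then 1 - ∑ j, z (ik.1, j, ik.2) else 0
        split
        · have := hzc ik.1 ik.2; linarith
        · exact le_refl 0
    · rintro (j | ik)
      · show (∑ b : (Fin n) ⊕ (Fin m × Fin n), M (Sum.inl j) b) = 1
        rw [Fintype.sum_sum_type]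
        have e1 : (∑ j' : Fin n, M (Sum.inl j) (Sum.inl j')) = 0 := by
          refine Finset.sum_eq_zero fun j' _ => rfl
        have e2 : (∑ ik : Fin m × Fin n, M (Sum.inl j) (Sum.inr ik))
            = ∑ i, ∑ k, z (i, j, k) := by
          rw [Fintype.sum_prod_type]
        rw [e1, e2, hzj j, zero_add]
      · show (∑ b : (Fin n) ⊕ (Fin m × Fin n), M (Sum.inr ik) b) = 1
        rw [Fintype.sum_sum_type]
        have e1 : (∑ j : Fin n, M (Sum.inr ik) (Sum.inl j)) = ∑ j, z (ik.1, j, ik.2) := rfl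
        have e2 : (∑ ik' : Fin m × Fin n, M (Sum.inr ik) (Sum.inr ik'))
            = 1 - ∑ j, z (ik.1, j, ik.2) := by
          show (∑ ik' : Fin m × Fin n,
            if ik = ik' then 1 - ∑ j, z (ik.1, j, ik.2) else 0) = _
          rw [Finset.sum_ite_eq]
          simp
        rw [e1, e2]
        ring
    · rintro (j | ik)
      · show (∑ a : (Fin n) ⊕ (Fin m × Fin n), M a (Sum.inl j)) = 1
        rw [Fintype.sum_sum_type]
        have e1 : (∑ j' : Fin n, M (Sum.inl j') (Sum.inl j)) = 0 := by
          refine Finset.sum_eq_zero fun j' _ => rfl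
        have e2 : (∑ ik : Fin m × Fin n, M (Sum.inr ik) (Sum.inl j))
            = ∑ i, ∑ k, z (i, j, k) := by
          rw [Fintype.sum_prod_type]
        rw [e1, e2, hzj j, zero_add]
      · show (∑ a : (Fin n) ⊕ (Fin m × Fin n), M a (Sum.inr ik)) = 1
        rw [Fintype.sum_sum_type]
        have e1 : (∑ j : Fin n, M (Sum.inl j) (Sum.inr ik)) = ∑ j, z (ik.1, j, ik.2) := rfl
        have e2 : (∑ ik' : Fin m × Fin n, M (Sum.inr ik') (Sum.inr ik))
            = 1 - ∑ j, z (ik.1, j, ik.2) := by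
          show (∑ ik' : Fin m × Fin n,
            if ik' = ik then 1 - ∑ j, z (ik'.1, j, ik'.2) else 0) = _
          rw [Finset.sum_ite_eq']
          simp
        rw [e1, e2]
        ring
  obtain ⟨w, hw0, hw1, hwM⟩ := exists_eq_sum_perm_of_mem_doublyStochastic hMds
  have hMval : ∀ a b, M a b = ∑ P : Equiv.Perm ((Fin n) ⊕ (Fin m × Fin n)), w P * (P.permMatrix ℝ a b) := by
    intro a b
    rw [← hwM]
    simp [Matrix.sum_apply, Matrix.smul_apply, smul_eq_mul]
  have hPM : ∀ (P : Equiv.Perm ((Fin n) ⊕ (Fin m × Fin n))) (a b : (Fin n) ⊕ (Fin m × Fin n)),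
      P.permMatrix ℝ a b = if P a = b then (1:ℝ) else 0 := by
    intro P a b
    simp [Equiv.Perm.permMatrix, PEquiv.toMatrix_apply, Equiv.toPEquiv_apply, eq_comm]
  have hent : ∀ P : Equiv.Perm ((Fin n) ⊕ (Fin m × Fin n)), w P ≠ 0 → ∀ a b, M a b = 0 → P.permMatrix ℝ a b = 0 := by
    intro P hP a b hMab
    have h0 : (∑ Q : Equiv.Perm ((Fin n) ⊕ (Fin m × Fin n)), w Q * (Q.permMatrix ℝ a b)) = 0 := by
      rw [← hMval a b, hMab]
    have hnn : ∀ Q : Equiv.Perm ((Fin n) ⊕ (Fin m × Fin n)), Q ∈ univ → 0 ≤ w Q * (Q.permMatrix ℝ a b) := by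
      intro Q _
      refine mul_nonneg (hw0 Q) ?_
      rw [hPM]
      split <;> norm_num
    have := (Finset.sum_eq_zero_iff_of_nonneg hnn).1 h0 P (mem_univ _)
    rcases mul_eq_zero.1 this with h | h
    · exact absurd h hP
    · exact h
  have hgood : ∀ P : Equiv.Perm ((Fin n) ⊕ (Fin m × Fin n)), w P ≠ 0 → ∃ σ' : Fin n → Fin m, Good p t σ' ∧
      ∀ q : Fin m × Fin n, (∑ k, P.permMatrix ℝ (Sum.inl q.2) (Sum.inr (q.1, k)))
        = assignVec σ' q := by
    intro P hP
    have himg : ∀ j : Fin n, ∃ ik : Fin m × Fin n, P (Sum.inl j) = Sum.inr ik := by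
      intro j
      rcases h : P (Sum.inl j) with j' | ik
      · exfalso
        have h1 : P.permMatrix ℝ (Sum.inl j) (Sum.inl j') = 1 := by rw [hPM, if_pos h]
        have h2 : M (Sum.inl j) (Sum.inl j') = 0 := rfl
        have := hent P hP (Sum.inl j) (Sum.inl j') h2
        rw [h1] at this
        norm_num at this
      · exact ⟨ik, rfl⟩
    choose f hf using himg
    have hfok : ∀ j, SlotOK p t (f j).1 j (f j).2 := by
      intro j
      by_contra hbad
      have hz0' : z ((f j).1, j, (f j).2) = 0 := hzf _ _ _ hbad
      have h2 : M (Sum.inl j) (Sum.inr (f j)) = 0 := hz0'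
      have := hent P hP (Sum.inl j) (Sum.inr (f j)) h2
      rw [hPM, if_pos (hf j)] at this
      norm_num at this
    refine ⟨fun j => (f j).1, ⟨fun j => (f j).2, hfok, ?_⟩, ?_⟩
    · intro j j' h1 h2
      have : f j = f j' := Prod.ext h1 h2
      have := (hf j).trans (this ▸ (hf j').symm)
      exact Sum.inl.inj (P.injective this)
    · intro q
      have : ∀ k : Fin n, P.permMatrix ℝ (Sum.inl q.2) (Sum.inr (q.1, k))
          = if (f q.2).1 = q.1 ∧ (f q.2).2 = k then (1:ℝ) else 0 := by
        intro k
        rw [hPM, hf q.2]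
        by_cases h1 : (f q.2).1 = q.1 ∧ (f q.2).2 = k
        · rw [if_pos, if_pos h1]
          rw [Sum.inr.injEq, Prod.ext_iff]
          exact h1
        · rw [if_neg, if_neg h1]
          rw [Sum.inr.injEq, Prod.ext_iff]
          exact h1
      simp only [this]
      rw [assignVec]
      by_cases h1 : (f q.2).1 = q.1
      · simp only [h1, true_and]
        rw [Finset.sum_ite_eq]
        simp [h1]
      · simp [h1]
  obtain ⟨σ0, hσ0⟩ := hex
  set Φ : Equiv.Perm ((Fin n) ⊕ (Fin m × Fin n)) → (Fin n → Fin m) := fun P =>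
    if h : w P ≠ 0 then (hgood P h).choose else σ0 with hΦ
  have hΦgood : ∀ P, Good p t (Φ P) := by
    intro P
    rw [hΦ]
    dsimp only
    split
    · exact (hgood P (by assumption)).choose_spec.1
    · exact hσ0
  have hΦsum : ∀ P, w P ≠ 0 → ∀ q : Fin m × Fin n,
      (∑ k, P.permMatrix ℝ (Sum.inl q.2) (Sum.inr (q.1, k))) = assignVec (Φ P) q := by
    intro P hP q
    rw [hΦ]
    dsimp only
    rw [dif_pos hP]
    exact (hgood P hP).choose_spec.2 q
  refine mem_convexHull_of_exists_fintype w (fun P => assignVec (Φ P)) hw0 hw1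
    (fun P => ⟨Φ P, hΦgood P, rfl⟩) ?_
  funext q
  have lhs_eq : (∑ P : Equiv.Perm ((Fin n) ⊕ (Fin m × Fin n)), w P • assignVec (Φ P)) q
      = ∑ P : Equiv.Perm ((Fin n) ⊕ (Fin m × Fin n)), w P * assignVec (Φ P) q := by
    rw [Finset.sum_apply]
    rfl
  rw [lhs_eq]
  have rhs_eq : projL n m z q = ∑ k, M (Sum.inl q.2) (Sum.inr (q.1, k)) := rfl
  rw [rhs_eq]
  calc (∑ P : Equiv.Perm ((Fin n) ⊕ (Fin m × Fin n)), w P * assignVec (Φ P) q)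
      = ∑ P : Equiv.Perm ((Fin n) ⊕ (Fin m × Fin n)), ∑ k, w P * P.permMatrix ℝ (Sum.inl q.2) (Sum.inr (q.1, k)) := by
        refine Finset.sum_congr rfl fun P _ => ?_
        by_cases hP : w P = 0
        · simp [hP]
        · rw [← Finset.mul_sum, hΦsum P hP q]
    _ = ∑ k, ∑ P : Equiv.Perm ((Fin n) ⊕ (Fin m × Fin n)), w P * P.permMatrix ℝ (Sum.inl q.2) (Sum.inr (q.1, k)) :=
        Finset.sum_comm
    _ = ∑ k, M (Sum.inl q.2) (Sum.inr (q.1, k)) := by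
        refine Finset.sum_congr rfl fun k _ => (hMval _ _).symm

theorem isEF_card_s10 {ι : Type} [Fintype ι] (P : Set (ι → ℝ)) {R S E' : Type}
    [Fintype R] [Fintype S] [Fintype E']
    (A : R → E' → ℝ) (b : R → ℝ) (C : S → E' → ℝ) (d : S → ℝ)
    (π : (E' → ℝ) →ₗ[ℝ] (ι → ℝ))
    (h : π '' {z | (∀ r, ∑ c, A r c * z c ≤ b r) ∧ (∀ s, ∑ c, C s c * z c = d s)} = P) :
    IsEF P (Fintype.card R) := by
  classical
  set εe : E' ≃ Fin (Fintype.card E') := Fintype.equivFin E' with hεe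
  set εr : R ≃ Fin (Fintype.card R) := Fintype.equivFin R with hεr
  set εs : S ≃ Fin (Fintype.card S) := Fintype.equivFin S with hεs
  set FL : (Fin (Fintype.card E') → ℝ) →ₗ[ℝ] (E' → ℝ) := LinearMap.funLeft ℝ ℝ εe with hFL
  refine ⟨Fintype.card E', Fintype.card S,
    (fun ρ c => A (εr.symm ρ) (εe.symm c)), b ∘ εr.symm,
    (fun ρ c => C (εs.symm ρ) (εe.symm c)), d ∘ εs.symm,
    (π.comp FL).toAffineMap, ?_⟩
  have hset : {y : Fin (Fintype.card E') → ℝ |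
      (∀ r, Matrix.mulVec (fun ρ c => A (εr.symm ρ) (εe.symm c)) y r ≤ (b ∘ εr.symm) r) ∧
      (∀ r, Matrix.mulVec (fun ρ c => C (εs.symm ρ) (εe.symm c)) y r = (d ∘ εs.symm) r)} =
      FL ⁻¹' {z | (∀ r, ∑ c, A r c * z c ≤ b r) ∧ (∀ s, ∑ c, C s c * z c = d s)} := by
    ext y
    simp only [Set.mem_setOf_eq, Set.mem_preimage]
    have hsum : ∀ (g : E' → ℝ), ∀ r : R,
        Matrix.mulVec (fun ρ c => A (εr.symm ρ) (εe.symm c)) y (εr r) = ∑ c, A r c * (FL y) c := by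
      intro g r
      simp only [Matrix.mulVec, dotProduct]
      show (∑ c, A (εr.symm (εr r)) (εe.symm c) * y c) = _
      rw [Equiv.symm_apply_apply]
      refine Fintype.sum_equiv εe.symm _ _ ?_
      intro c
      simp [hFL]
    have hsum2 : ∀ r : S,
        Matrix.mulVec (fun ρ c => C (εs.symm ρ) (εe.symm c)) y (εs r) = ∑ c, C r c * (FL y) c := by
      intro r
      simp only [Matrix.mulVec, dotProduct]
      show (∑ c, C (εs.symm (εs r)) (εe.symm c) * y c) = _
      rw [Equiv.symm_apply_apply]
      refine Fintype.sum_equiv εe.symm _ _ ?_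
      intro c
      simp [hFL]
    constructor
    · rintro ⟨h1, h2⟩
      constructor
      · intro r
        rw [← hsum (FL y) r]
        simpa using h1 (εr r)
      · intro s
        rw [← hsum2 s]
        simpa using h2 (εs s)
    · rintro ⟨h1, h2⟩
      constructor
      · intro ρ
        have := h1 (εr.symm ρ)
        rw [← hsum (FL y) (εr.symm ρ)] at this
        simpa using this
      · intro ρ
        have := h2 (εs.symm ρ)
        rw [← hsum2 (εs.symm ρ)] at this
        simpa using this
  have himg : ((π.comp FL).toAffineMap) ''
      {y : Fin (Fintype.card E') → ℝ |
      (∀ r, Matrix.mulVec (fun ρ c => A (εr.symm ρ) (εe.symm c)) y r ≤ (b ∘ εr.symm) r) ∧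
      (∀ r, Matrix.mulVec (fun ρ c => C (εs.symm ρ) (εe.symm c)) y r = (d ∘ εs.symm) r)} = P := by
    rw [hset, ← h]
    have : ⇑(π.comp FL).toAffineMap = ⇑π ∘ ⇑FL := rfl
    rw [this, Set.image_comp]
    have hpre : ⇑FL '' (⇑FL ⁻¹' {z | (∀ r, ∑ c, A r c * z c ≤ b r) ∧ (∀ s, ∑ c, C s c * z c = d s)})
        = {z | (∀ r, ∑ c, A r c * z c ≤ b r) ∧ (∀ s, ∑ c, C s c * z c = d s)} :=
      Set.image_preimage_eq _
        (by rw [hFL]; exact LinearMap.funLeft_surjective_of_injective ℝ ℝ _ εe.injective)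
    rw [hpre]
  exact himg


theorem cset_eq (p : Fin m → Fin n → ℕ∞) (t : ℕ∞) :
    {z : Fin m × Fin n × Fin n → ℝ |
      (∀ r : (Fin m × Fin n × Fin n) ⊕ (Fin m × Fin n),
        ∑ c, (Sum.elim (fun s (c : Fin m × Fin n × Fin n) => if c = s then (-1 : ℝ) else 0)
          (fun ik (c : Fin m × Fin n × Fin n) => if c.1 = ik.1 ∧ c.2.2 = ik.2 then (1 : ℝ) else 0)) r c * z c
          ≤ Sum.elim (fun _ => (0:ℝ)) (fun _ => (1:ℝ)) r) ∧
      (∀ s : (Fin n) ⊕ (Fin m × Fin n × Fin n),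
        ∑ c, (Sum.elim (fun j (c : Fin m × Fin n × Fin n) => if c.2.1 = j then (1 : ℝ) else 0)
          (fun s0 (c : Fin m × Fin n × Fin n) => if c = s0 ∧ ¬ SlotOK p t s0.1 s0.2.1 s0.2.2 then (1:ℝ) else 0)) s c * z c
          = Sum.elim (fun _ => (1:ℝ)) (fun _ => (0:ℝ)) s)} = Zset p t := by
  have row1 : ∀ z : Fin m × Fin n × Fin n → ℝ, ∀ s : Fin m × Fin n × Fin n,
      (∑ c : Fin m × Fin n × Fin n, (if c = s then (-1:ℝ) else 0) * z c) = - z s := by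
    intro z s
    rw [show (fun c => (if c = s then (-1:ℝ) else 0) * z c)
        = (fun c => if c = s then -z c else 0) from funext fun c => by split <;> simp_all]
    rw [Finset.sum_ite_eq']
    simp
  have row2 : ∀ z : Fin m × Fin n × Fin n → ℝ, ∀ i : Fin m, ∀ k : Fin n,
      (∑ c : Fin m × Fin n × Fin n, (if c.1 = i ∧ c.2.2 = k then (1:ℝ) else 0) * z c)
        = ∑ j, z (i, j, k) := by
    intro z i k
    rw [Fintype.sum_prod_type]
    rw [show (∑ i' : Fin m, ∑ c2 : Fin n × Fin n,
          (if i' = i ∧ c2.2 = k then (1:ℝ) else 0) * z (i', c2.1, c2.2))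
        = ∑ i' : Fin m, if i' = i then (∑ c2 : Fin n × Fin n,
          (if c2.2 = k then (1:ℝ) else 0) * z (i', c2.1, c2.2)) else 0 from
      Finset.sum_congr rfl fun i' _ => by
        by_cases h : i' = i
        · simp [h]
        · simp [h]]
    rw [Finset.sum_ite_eq']
    simp only [mem_univ, if_true]
    rw [Fintype.sum_prod_type]
    rw [Finset.sum_comm]
    rw [show (∑ k' : Fin n, ∑ j : Fin n, (if k' = k then (1:ℝ) else 0) * z (i, j, k'))
        = ∑ k' : Fin n, if k' = k then (∑ j : Fin n, z (i, j, k')) else 0 from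
      Finset.sum_congr rfl fun k' _ => by
        by_cases h : k' = k
        · simp [h]
        · simp [h]]
    rw [Finset.sum_ite_eq']
    simp
  have row3 : ∀ z : Fin m × Fin n × Fin n → ℝ, ∀ j : Fin n,
      (∑ c : Fin m × Fin n × Fin n, (if c.2.1 = j then (1:ℝ) else 0) * z c)
        = ∑ i, ∑ k, z (i, j, k) := by
    intro z j
    rw [Fintype.sum_prod_type]
    refine Finset.sum_congr rfl fun i _ => ?_
    rw [Fintype.sum_prod_type]
    rw [show (∑ j' : Fin n, ∑ k : Fin n, (if j' = j then (1:ℝ) else 0) * z (i, j', k))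
        = ∑ j' : Fin n, if j' = j then (∑ k : Fin n, z (i, j', k)) else 0 from
      Finset.sum_congr rfl fun j' _ => by
        by_cases h : j' = j
        · simp [h]
        · simp [h]]
    rw [Finset.sum_ite_eq']
    simp
  have row4 : ∀ z : Fin m × Fin n × Fin n → ℝ, ∀ s0 : Fin m × Fin n × Fin n,
      (∑ c : Fin m × Fin n × Fin n,
        (if c = s0 ∧ ¬ SlotOK p t s0.1 s0.2.1 s0.2.2 then (1:ℝ) else 0) * z c)
        = if ¬ SlotOK p t s0.1 s0.2.1 s0.2.2 then z s0 else 0 := by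
    intro z s0
    by_cases hok : SlotOK p t s0.1 s0.2.1 s0.2.2
    · simp [hok]
    · rw [if_pos hok]
      rw [show (fun c => (if c = s0 ∧ ¬ SlotOK p t s0.1 s0.2.1 s0.2.2 then (1:ℝ) else 0) * z c)
          = (fun c => if c = s0 then z c else 0) from funext fun c => by
        by_cases h : c = s0 <;> simp [h, hok]]
      rw [Finset.sum_ite_eq']
      simp
  ext z
  simp only [Set.mem_setOf_eq]
  constructor
  · rintro ⟨h1, h2⟩
    refine ⟨?_, ?_, ?_, ?_⟩
    · intro s
      have := h1 (Sum.inl s)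
      rw [Sum.elim_inl, Sum.elim_inl] at this
      rw [row1 z s] at this
      linarith
    · intro i k
      have := h1 (Sum.inr (i, k))
      rw [Sum.elim_inr, Sum.elim_inr] at this
      rw [row2 z i k] at this
      exact this
    · intro j
      have := h2 (Sum.inl j)
      rw [Sum.elim_inl, Sum.elim_inl] at this
      rw [row3 z j] at this
      exact this
    · intro i j k hbad
      have := h2 (Sum.inr (i, j, k))
      rw [Sum.elim_inr, Sum.elim_inr] at this
      rw [row4 z (i, j, k)] at this
      rw [if_pos hbad] at this
      exact this
  · rintro ⟨h1, h2, h3, h4⟩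
    constructor
    · rintro (s | ⟨i, k⟩)
      · rw [Sum.elim_inl, Sum.elim_inl, row1 z s]
        have := h1 s
        linarith
      · rw [Sum.elim_inr, Sum.elim_inr, row2 z i k]
        exact h2 i k
    · rintro (j | ⟨i, j, k⟩)
      · rw [Sum.elim_inl, Sum.elim_inl, row3 z j]
        exact h3 j
      · rw [Sum.elim_inr, Sum.elim_inr, row4 z (i, j, k)]
        by_cases hbad : SlotOK p t (i,j,k).1 (i,j,k).2.1 (i,j,k).2.2
        · rw [if_neg (by simpa using hbad)]
        · rw [if_pos (by simpa using hbad)]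
          exact h4 i j k hbad


theorem image_eq (p : Fin m → Fin n → ℕ∞) (t : ℕ∞)
    (hex : ∃ σ0 : Fin n → Fin m, Good p t σ0) :
    projL n m '' Zset p t = convexHull ℝ (GoodSet p t) := by
  refine subset_antisymm ?_ (convexHull_min (goodSet_sub p t) ((zset_convex p t).linear_image _))
  rintro x ⟨z, hz, rfl⟩
  exact zset_sub p t hex hz

end Aux

/-- For every instance of `R||C_max` admitting a schedule of finite makespan there is a
polytope `Q̄ ⊆ Q(J,M)` containing the assignment vector of every optimal schedule, whose
extreme points all are assignment vectors of schedules of makespan at most `H_n · opt`,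
and with `xc(Q̄) ≤ c·n²·m`. -/

theorem approx_extended_formulation :
    ∃ c : ℕ, 0 < c ∧ ∀ (n m : ℕ) (p : Fin m → Fin n → ℕ∞), 2 ≤ n →
      (∃ σ : Fin n → Fin m, Rmakespan p σ ≠ ⊤) →
      ∃ Qbar : Set (Fin m × Fin n → ℝ),
        (∃ S : Set (Fin m × Fin n → ℝ), S.Finite ∧ Qbar = convexHull ℝ S) ∧
        Qbar ⊆ Qpoly n m ∧
        (∀ x ∈ Set.extremePoints ℝ Qbar, ∃ σ : Fin n → Fin m, x = assignVec σ ∧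
          (Rmakespan p σ : ℝ≥0∞) ≤
            (∑ ℓ ∈ Finset.range n, (1 : ℝ≥0∞) / ((ℓ : ℝ≥0∞) + 1)) *
              (Ropt n m p : ℝ≥0∞)) ∧
        (∀ σ : Fin n → Fin m, Rmakespan p σ = Ropt n m p → assignVec σ ∈ Qbar) ∧
        xc Qbar ≤ c * n ^ 2 * m := by
  refine ⟨2, by norm_num, ?_⟩
  intro n m p hn hfin
  obtain ⟨σf, hσf⟩ := hfin
  have hm : 0 < m := by
    rcases Nat.eq_zero_or_pos m with h | h
    · subst h; exact (σf ⟨0, by omega⟩).elim0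
    · exact h
  have hn0 : 0 < n := by omega
  have hopt : ∃ τ : Fin n → Fin m, Rmakespan p τ = Ropt n m p := by
    obtain ⟨a, ha, hmin⟩ := (wellFounded_lt (α := ℕ∞)).has_min
      {t | ∃ σ : Fin n → Fin m, Rmakespan p σ = t} ⟨_, σf, rfl⟩
    obtain ⟨τ, hτ⟩ := ha
    refine ⟨τ, ?_⟩
    rw [hτ, Ropt]
    exact le_antisymm (le_sInf fun b hb => not_lt.1 (hmin b hb)) (sInf_le ⟨τ, hτ⟩)
  obtain ⟨τ, hτ⟩ := hopt
  set t := Ropt n m p with ht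
  have hτgood : Good p t τ := optimal_good p t τ hn0 (le_of_eq hτ)
  refine ⟨convexHull ℝ (GoodSet p t), ⟨GoodSet p t, ?_, rfl⟩, ?_, ?_, ?_, ?_⟩
  · refine Set.Finite.subset (Set.finite_range (assignVec : (Fin n → Fin m) → _)) ?_
    rintro x ⟨σ, -, rfl⟩
    exact ⟨σ, rfl⟩
  · rw [Qpoly]
    refine convexHull_mono ?_
    rintro x ⟨σ, -, rfl⟩
    exact ⟨σ, rfl⟩
  · intro x hx
    have hxS : x ∈ GoodSet p t := extremePoints_convexHull_subset hx
    obtain ⟨σ, hσgood, rfl⟩ := hxS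
    exact ⟨σ, rfl, good_makespan p t σ hm hσgood⟩
  · intro σ hσ
    exact subset_convexHull ℝ _ ⟨σ, optimal_good p t σ hn0 (le_of_eq hσ), rfl⟩
  · have hEF : IsEF (convexHull ℝ (GoodSet p t))
        (Fintype.card ((Fin m × Fin n × Fin n) ⊕ (Fin m × Fin n))) := by
      refine isEF_card_s10 _
        (Sum.elim (fun s (c : Fin m × Fin n × Fin n) => if c = s then (-1:ℝ) else 0)
          (fun ik (c : Fin m × Fin n × Fin n) =>
            if c.1 = ik.1 ∧ c.2.2 = ik.2 then (1:ℝ) else 0))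
        (Sum.elim (fun _ => (0:ℝ)) (fun _ => (1:ℝ)))
        (Sum.elim (fun j (c : Fin m × Fin n × Fin n) => if c.2.1 = j then (1:ℝ) else 0)
          (fun s0 (c : Fin m × Fin n × Fin n) =>
            if c = s0 ∧ ¬ SlotOK p t s0.1 s0.2.1 s0.2.2 then (1:ℝ) else 0))
        (Sum.elim (fun _ => (1:ℝ)) (fun _ => (0:ℝ)))
        (projL n m) ?_
      rw [cset_eq p t, image_eq p t ⟨τ, hτgood⟩]
    have hle : xc (convexHull ℝ (GoodSet p t))
        ≤ Fintype.card ((Fin m × Fin n × Fin n) ⊕ (Fin m × Fin n)) := Nat.sInf_le hEF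
    refine le_trans hle ?_
    simp only [Fintype.card_sum, Fintype.card_prod, Fintype.card_fin]
    have h1 : m * n ≤ m * (n * n) :=
      Nat.mul_le_mul_left _ (Nat.le_mul_of_pos_left n hn0)
    calc m * (n * n) + m * n ≤ m * (n * n) + m * (n * n) := Nat.add_le_add_left h1 _
      _ = 2 * n ^ 2 * m := by ring
end
end

section
/- Let T > 0 be a real number, let n ≥ 1 be an integer, and let S be a finite set with |S| ≤ n together with positive real numbers p_j for j ∈ S such that ∑_{j∈S} p_j ≤ T. Then there exists an injective map ϕ : S → {1,…,n} such that p_j ≤ T/ϕ(j) for every j ∈ S. Equivalently, the bipartite graph with parts S and {1,…,n}, in which j ∈ S is adjacent to slot ℓ ∈ {1,…,n} if and only if p_j ≤ T/ℓ, has a matching saturating S. -/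
/-!
Sort the jobs by non-increasing processing time and put the `ℓ`-th largest job into slot `ℓ`.
The `ℓ` largest jobs all have processing time at least `p` of the `ℓ`-th one, so
`ℓ • p ≤ ∑ p ≤ T`; and there are at most `n` jobs, so every slot index is at most `n`.
-/

open Finset

theorem Fin.succ_nsmul_le_sum_of_antitone {M : Type*} [AddCommMonoid M] [Preorder M]
    [AddLeftMono M] {k : ℕ} {g : Fin k → M} (hg : Antitone g) (hg₀ : ∀ i, 0 ≤ g i)
    (i : Fin k) : (i.val + 1) • g i ≤ ∑ m, g m :=
  calc (i.val + 1) • g i = #(Iic i) • g i := by rw [Fin.card_Iic]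
    _ ≤ ∑ m ∈ Iic i, g m := card_nsmul_le_sum _ _ _ fun m hm => hg (mem_Iic.mp hm)
    _ ≤ ∑ m, g m := sum_le_sum_of_subset_of_nonneg (subset_univ _) fun m _ _ => hg₀ m

theorem Fintype.exists_equiv_fin_antitone {S α : Type*} [Fintype S] [LinearOrder α]
    (p : S → α) : ∃ e : S ≃ Fin (Fintype.card S), Antitone (p ∘ e.symm) := by
  let e₀ := Fintype.equivFin S
  -- Sorting into the order dual sorts in non-increasing order.
  let f : Fin (Fintype.card S) → αᵒᵈ := fun i => OrderDual.toDual (p (e₀.symm i))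
  exact ⟨e₀.trans (Tuple.sort f).symm, fun _ _ h => Tuple.monotone_sort f h⟩

theorem Fintype.exists_equiv_fin_succ_nsmul_le_sum {S M : Type*} [Fintype S]
    [AddCommMonoid M] [LinearOrder M] [IsOrderedAddMonoid M] (p : S → M) (hp : ∀ j, 0 ≤ p j) :
    ∃ e : S ≃ Fin (Fintype.card S), ∀ j, ((e j).val + 1) • p j ≤ ∑ i, p i := by
  obtain ⟨e, he⟩ := Fintype.exists_equiv_fin_antitone p
  refine ⟨e, fun j => ?_⟩
  simpa only [Function.comp_apply, e.symm_apply_apply, e.symm.sum_comp p] using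
    Fin.succ_nsmul_le_sum_of_antitone he (fun i => hp _) (e j)

theorem jobs_match_to_slots_general (T : ℝ) (n : ℕ)
    {S : Type} [Fintype S] (hS : Fintype.card S ≤ n)
    (p : S → ℝ) (hp : ∀ j, 0 < p j) (hsum : ∑ j, p j ≤ T) :
    ∃ φ : S → ℕ, Function.Injective φ ∧
      ∀ j, 1 ≤ φ j ∧ φ j ≤ n ∧ p j ≤ T / (φ j : ℝ) := by
  obtain ⟨e, he⟩ := Fintype.exists_equiv_fin_succ_nsmul_le_sum p fun j => (hp j).le
  refine ⟨fun j => (e j).val + 1, fun a b hab => e.injective (Fin.ext (Nat.succ_injective hab)),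
    fun j => ?_⟩
  refine ⟨Nat.le_add_left 1 _, (e j).isLt.trans_le hS, ?_⟩
  rw [le_div_iff₀ (by positivity), mul_comm, ← nsmul_eq_mul]
  exact (he j).trans hsum

/-- Hall-type matching lemma: if `|S| ≤ n` and the positive numbers `p j` sum to at most
`T > 0`, then the jobs of `S` can be injectively assigned to slots `1, …, n` so that the
job in slot `ℓ` has `p j ≤ T/ℓ`. -/
theorem jobs_match_to_slots (T : ℝ) (hT : 0 < T) (n : ℕ) (hn : 1 ≤ n)
    {S : Type} [Fintype S] (hS : Fintype.card S ≤ n)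
    (p : S → ℝ) (hp : ∀ j, 0 < p j) (hsum : ∑ j, p j ≤ T) :
    ∃ φ : S → ℕ, Function.Injective φ ∧
      ∀ j, 1 ≤ φ j ∧ φ j ≤ n ∧ p j ≤ T / (φ j : ℝ) :=
  jobs_match_to_slots_general T n hS p hp hsum
end

section
/- Let n ≥ 1, let M be a set of n machines, let J be a set of 2n jobs with p_j = 1 for every j ∈ J, and let T = 2. Let K_{2n} denote the complete graph on vertex set J with edge set E, and let PM(K_{2n}) ⊆ ℝ^E denote the convex hull of the incidence vectors of the perfect matchings of K_{2n}. Define the linear map f : ℝ^{M×𝒞(2)} → ℝ^E by f_{\{u,v\}}(y) = ∑_{i∈M} y_{i,\{u,v\}} for every edge {u,v} ∈ E. Then f(P_config(J,M,2)) = PM(K_{2n}), i.e., P_config(J,M,2) is an extended formulation of the perfect matching polytope of K_{2n}. -/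
open Finset

noncomputable section

/-- A configuration for target makespan `T`: a set of jobs of total processing time at
most `T`. -/
abbrev Config (N : ℕ) (p : Fin N → ℕ) (T : ℕ) := {L : Finset (Fin N) // ∑ j ∈ L, p j ≤ T}

/-- `P_config(J,M,T)`: the convex hull of all 0/1 vectors `y` such that every job is in
exactly one chosen configuration and every machine gets exactly one configuration. -/
def Pconfig (m N : ℕ) (p : Fin N → ℕ) (T : ℕ) : Set (Fin m × Config N p T → ℝ) :=
  convexHull ℝ {y | (∀ q, y q = 0 ∨ y q = 1) ∧
    (∀ j : Fin N, ∑ i : Fin m, ∑ C : Config N p T,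
      (if j ∈ C.1 then y (i, C) else 0) = 1) ∧
    (∀ i : Fin m, ∑ C : Config N p T, y (i, C) = 1)}

/-- The edges of the complete graph on `Fin N`: two-element subsets of `Fin N`. -/
abbrev EdgeT (N : ℕ) := {e : Finset (Fin N) // e.card = 2}

/-- The perfect matching polytope of the complete graph on `Fin N`: the convex hull of the
incidence vectors of all perfect matchings. -/
def PMpoly (N : ℕ) : Set (EdgeT N → ℝ) :=
  convexHull ℝ {x | ∃ Mset : Finset (EdgeT N),
    (∀ v : Fin N, (Mset.filter (fun e => v ∈ e.1)).card = 1) ∧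
    x = fun e => if e ∈ Mset then (1 : ℝ) else 0}

namespace PconfigPMAux

variable {N : ℕ}

/-- Abbreviation for the configurations appearing in the theorem. -/
abbrev Cfg (N : ℕ) := Config N (fun _ => 1) 2

lemma card_le_two (C : Cfg N) : C.1.card ≤ 2 := by simpa using C.2

/-- Build a configuration from a set of at most two jobs. -/
def mkC (S : Finset (Fin N)) (h : S.card ≤ 2) : Cfg N := ⟨S, by simpa using h⟩

lemma sum_config (S : Finset (Fin N)) (h : S.card ≤ 2) (f : Cfg N → ℝ) :
    ∑ C : Cfg N, (if C.1 = S then f C else 0) = f (mkC S h) := by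
  have key : ∀ C : Cfg N, C.1 = S ↔ C = mkC S h := by
    intro C
    constructor
    · intro hC; exact Subtype.ext hC
    · intro hC; rw [hC]; rfl
  simp only [key]
  simp [Finset.sum_ite_eq' Finset.univ (mkC S h) f]

end PconfigPMAux

open PconfigPMAux in
/-- Forward direction: the projection of a vertex of `Pconfig` is a matching vector. -/
lemma pconfig_vertex_projects (n : ℕ) (y : Fin n × Cfg (2 * n) → ℝ)
    (h01 : ∀ q, y q = 0 ∨ y q = 1)
    (hjob : ∀ j : Fin (2 * n), ∑ i : Fin n, ∑ C : Cfg (2 * n),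
      (if j ∈ C.1 then y (i, C) else 0) = 1)
    (hmach : ∀ i : Fin n, ∑ C : Cfg (2 * n), y (i, C) = 1) :
    ∃ Mset : Finset (EdgeT (2 * n)),
      (∀ v : Fin (2 * n), (Mset.filter (fun e => v ∈ e.1)).card = 1) ∧
      (fun e : EdgeT (2 * n) => ∑ i : Fin n, ∑ C : Cfg (2 * n),
        (if C.1 = e.1 then y (i, C) else 0))
        = fun e => if e ∈ Mset then (1 : ℝ) else 0 := by
  classical
  set fy : EdgeT (2 * n) → ℝ := fun e => ∑ i : Fin n, ∑ C : Cfg (2 * n),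
    (if C.1 = e.1 then y (i, C) else 0) with hfy
  have hynn : ∀ q, 0 ≤ y q := by
    intro q; rcases h01 q with h | h <;> rw [h] <;> norm_num
  -- product forms of the sums
  have hfyprod : ∀ e : EdgeT (2 * n),
      fy e = ∑ q : Fin n × Cfg (2 * n), (if q.2.1 = e.1 then y q else 0) := by
    intro e; rw [hfy]; rw [Fintype.sum_prod_type]
  have hjobprod : ∀ j : Fin (2 * n),
      ∑ q : Fin n × Cfg (2 * n), (if j ∈ q.2.1 then y q else 0) = 1 := by
    intro j; rw [Fintype.sum_prod_type]; exact hjob j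
  -- Step A: configurations of size ≤ 1 are never used
  have hzero : ∀ q : Fin n × Cfg (2 * n), q.2.1.card ≤ 1 → y q = 0 := by
    have h1 : ∑ i : Fin n, ∑ C : Cfg (2 * n), (2 : ℝ) * y (i, C) = 2 * n := by
      have : ∀ i : Fin n, ∑ C : Cfg (2 * n), (2 : ℝ) * y (i, C) = 2 := by
        intro i; rw [← Finset.mul_sum, hmach i, mul_one]
      rw [Finset.sum_congr rfl fun i _ => this i]
      simp [mul_comm]
    have h2 : ∑ i : Fin n, ∑ C : Cfg (2 * n), ((C.1.card : ℝ)) * y (i, C) = 2 * n := by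
      have hterm : ∀ (i : Fin n) (C : Cfg (2 * n)),
          ((C.1.card : ℝ)) * y (i, C)
            = ∑ j : Fin (2 * n), (if j ∈ C.1 then y (i, C) else 0) := by
        intro i C
        rw [Finset.sum_ite_mem, Finset.univ_inter, Finset.sum_const, nsmul_eq_mul]
      calc ∑ i : Fin n, ∑ C : Cfg (2 * n), ((C.1.card : ℝ)) * y (i, C)
          = ∑ i : Fin n, ∑ C : Cfg (2 * n), ∑ j : Fin (2 * n),
              (if j ∈ C.1 then y (i, C) else 0) := by
            exact Finset.sum_congr rfl fun i _ =>
              Finset.sum_congr rfl fun C _ => hterm i C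
        _ = ∑ i : Fin n, ∑ j : Fin (2 * n), ∑ C : Cfg (2 * n),
              (if j ∈ C.1 then y (i, C) else 0) := by
            exact Finset.sum_congr rfl fun i _ => Finset.sum_comm
        _ = ∑ j : Fin (2 * n), ∑ i : Fin n, ∑ C : Cfg (2 * n),
              (if j ∈ C.1 then y (i, C) else 0) := Finset.sum_comm
        _ = ∑ _j : Fin (2 * n), (1 : ℝ) := Finset.sum_congr rfl fun j _ => hjob j
        _ = 2 * n := by
            rw [Finset.sum_const, Finset.card_univ, Fintype.card_fin, nsmul_eq_mul,
              mul_one]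
            push_cast; ring
    have hsum : ∑ q : Fin n × Cfg (2 * n), (2 - (q.2.1.card : ℝ)) * y q = 0 := by
      rw [Fintype.sum_prod_type]
      have : ∀ (i : Fin n) (C : Cfg (2 * n)),
          (2 - (C.1.card : ℝ)) * y (i, C)
            = 2 * y (i, C) - (C.1.card : ℝ) * y (i, C) := fun i C => by ring
      rw [Finset.sum_congr rfl fun i _ => Finset.sum_congr rfl fun C _ => this i C]
      rw [Finset.sum_congr rfl fun i (_ : i ∈ Finset.univ) => Finset.sum_sub_distrib _ _,
        Finset.sum_sub_distrib, h1, h2, sub_self]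
    have hnn : ∀ q ∈ (Finset.univ : Finset (Fin n × Cfg (2 * n))),
        0 ≤ (2 - (q.2.1.card : ℝ)) * y q := by
      intro q _
      apply mul_nonneg _ (hynn q)
      have := card_le_two q.2
      have : ((q.2.1.card : ℝ)) ≤ 2 := by exact_mod_cast this
      linarith
    have hall := (Finset.sum_eq_zero_iff_of_nonneg hnn).1 hsum
    intro q hq
    have := hall q (Finset.mem_univ q)
    rcases mul_eq_zero.1 this with h | h
    · exfalso
      have : ((q.2.1.card : ℝ)) ≤ 1 := by exact_mod_cast hq
      linarith
    · exact h
  -- Step C: degree sums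
  have hdeg : ∀ v : Fin (2 * n),
      ∑ e : EdgeT (2 * n), (if v ∈ e.1 then fy e else 0) = 1 := by
    intro v
    have step1 : ∑ e : EdgeT (2 * n), (if v ∈ e.1 then fy e else 0)
        = ∑ e : EdgeT (2 * n), ∑ q : Fin n × Cfg (2 * n),
            (if v ∈ e.1 then (if q.2.1 = e.1 then y q else 0) else 0) := by
      refine Finset.sum_congr rfl fun e _ => ?_
      rw [hfyprod e]
      split <;> simp
    rw [step1, Finset.sum_comm]
    have step2 : ∀ q : Fin n × Cfg (2 * n),
        ∑ e : EdgeT (2 * n), (if v ∈ e.1 then (if q.2.1 = e.1 then y q else 0) else 0)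
          = if v ∈ q.2.1 ∧ q.2.1.card = 2 then y q else 0 := by
      intro q
      by_cases hc : q.2.1.card = 2
      · rw [Finset.sum_eq_single (⟨q.2.1, hc⟩ : EdgeT (2 * n))]
        · simp [hc]
        · intro e _ hne
          by_cases hv : v ∈ e.1
          · rw [if_pos hv, if_neg]
            intro heq
            exact hne (Subtype.ext heq.symm)
          · rw [if_neg hv]
        · intro h; exact absurd (Finset.mem_univ _) h
      · rw [if_neg (fun h => hc h.2)]
        refine Finset.sum_eq_zero fun e _ => ?_
        by_cases hv : v ∈ e.1
        · rw [if_pos hv, if_neg]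
          intro heq; exact hc (heq ▸ e.2)
        · rw [if_neg hv]
    rw [Finset.sum_congr rfl fun q _ => step2 q]
    rw [← hjobprod v]
    refine Finset.sum_congr rfl fun q _ => ?_
    by_cases hv : v ∈ q.2.1
    · by_cases hc : q.2.1.card = 2
      · rw [if_pos ⟨hv, hc⟩, if_pos hv]
      · rw [if_neg (fun h => hc h.2), if_pos hv]
        have : q.2.1.card ≤ 1 := by
          have := card_le_two q.2
          omega
        exact (hzero q this).symm
    · rw [if_neg (fun h => hv h.1), if_neg hv]
  -- Step B/D: fy is 0/1 valued
  set m : EdgeT (2 * n) → ℕ :=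
    fun e => (Finset.univ.filter fun q : Fin n × Cfg (2 * n) => q.2.1 = e.1 ∧ y q = 1).card
    with hmdef
  have hm : ∀ e, fy e = (m e : ℝ) := by
    intro e
    rw [hfyprod e, hmdef]
    have hterm : ∀ q : Fin n × Cfg (2 * n),
        (if q.2.1 = e.1 then y q else 0)
          = (if q.2.1 = e.1 ∧ y q = 1 then (1 : ℝ) else 0) := by
      intro q
      rcases h01 q with h | h <;> by_cases hc : q.2.1 = e.1 <;> simp [h, hc]
    rw [Finset.sum_congr rfl fun q _ => hterm q, Finset.sum_boole]
  have hfynn : ∀ e, 0 ≤ fy e := fun e => by rw [hm e]; exact Nat.cast_nonneg _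
  have hle : ∀ e, fy e ≤ 1 := by
    intro e
    obtain ⟨v, hv⟩ : ∃ v, v ∈ e.1 := by
      have : e.1.card = 2 := e.2
      have : e.1.Nonempty := Finset.card_pos.1 (by omega)
      exact this
    calc fy e = (if v ∈ e.1 then fy e else 0) := by rw [if_pos hv]
      _ ≤ ∑ e' : EdgeT (2 * n), (if v ∈ e'.1 then fy e' else 0) := by
          refine Finset.single_le_sum
            (f := fun e' : EdgeT (2 * n) => if v ∈ e'.1 then fy e' else 0)
            (fun e' _ => ?_) (Finset.mem_univ e)
          split
          · exact hfynn e'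
          · exact le_refl 0
      _ = 1 := hdeg v
  have hfy01 : ∀ e, fy e = 0 ∨ fy e = 1 := by
    intro e
    have h1 : m e ≤ 1 := by
      have := hle e
      rw [hm e] at this
      exact_mod_cast this
    have h2 : m e = 0 ∨ m e = 1 := by omega
    rcases h2 with h | h
    · left; rw [hm e, h]; norm_num
    · right; rw [hm e, h]; norm_num
  refine ⟨Finset.univ.filter (fun e => fy e = 1), ?_, ?_⟩
  · intro v
    have key : ∑ e : EdgeT (2 * n), (if v ∈ e.1 then fy e else 0)
        = ∑ e : EdgeT (2 * n), (if fy e = 1 ∧ v ∈ e.1 then (1 : ℝ) else 0) := by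
      refine Finset.sum_congr rfl fun e _ => ?_
      rcases hfy01 e with h | h <;> by_cases hv : v ∈ e.1 <;> simp [h, hv]
    have key2 := hdeg v
    rw [key, Finset.sum_boole] at key2
    rw [Finset.filter_filter]
    exact_mod_cast key2
  · funext e
    show fy e = _
    rcases hfy01 e with h | h
    · rw [h, if_neg]
      simp only [Finset.mem_filter, Finset.mem_univ, true_and]
      rw [h]; norm_num
    · rw [h, if_pos]
      simp only [Finset.mem_filter, Finset.mem_univ, true_and]
      exact h

open PconfigPMAux in
/-- Backward direction: each matching vector is the projection of a vertex of `Pconfig`. -/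
lemma matching_lifts (n : ℕ) (Mset : Finset (EdgeT (2 * n)))
    (hdeg : ∀ v : Fin (2 * n), (Mset.filter (fun e => v ∈ e.1)).card = 1) :
    ∃ y : Fin n × Cfg (2 * n) → ℝ,
      ((∀ q, y q = 0 ∨ y q = 1) ∧
       (∀ j : Fin (2 * n), ∑ i : Fin n, ∑ C : Cfg (2 * n),
         (if j ∈ C.1 then y (i, C) else 0) = 1) ∧
       (∀ i : Fin n, ∑ C : Cfg (2 * n), y (i, C) = 1)) ∧
      (fun e : EdgeT (2 * n) => ∑ i : Fin n, ∑ C : Cfg (2 * n),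
        (if C.1 = e.1 then y (i, C) else 0))
        = fun e => if e ∈ Mset then (1 : ℝ) else 0 := by
  classical
  -- the matching has exactly n edges
  have hcard : Mset.card = n := by
    have h1 : ∑ v : Fin (2 * n), (Mset.filter (fun e => v ∈ e.1)).card = 2 * n := by
      rw [Finset.sum_congr rfl fun v _ => hdeg v]
      simp
    have h2 : ∑ v : Fin (2 * n), (Mset.filter (fun e => v ∈ e.1)).card
        = 2 * Mset.card := by
      calc ∑ v : Fin (2 * n), (Mset.filter (fun e => v ∈ e.1)).card
          = ∑ v : Fin (2 * n), ∑ e ∈ Mset, (if v ∈ e.1 then 1 else 0) := by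
            refine Finset.sum_congr rfl fun v _ => ?_
            rw [Finset.card_filter]
        _ = ∑ e ∈ Mset, ∑ v : Fin (2 * n), (if v ∈ e.1 then 1 else 0) := Finset.sum_comm
        _ = ∑ e ∈ Mset, e.1.card := by
            refine Finset.sum_congr rfl fun e _ => ?_
            rw [Finset.sum_ite_mem, Finset.univ_inter, Finset.sum_const, smul_eq_mul,
              mul_one]
        _ = ∑ _e ∈ Mset, 2 := Finset.sum_congr rfl fun e _ => e.2
        _ = 2 * Mset.card := by rw [Finset.sum_const, smul_eq_mul, mul_comm]
    omega
  have hcard' : Fintype.card {e // e ∈ Mset} = n := by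
    rw [Fintype.card_coe]; exact hcard
  set g : {e // e ∈ Mset} ≃ Fin n := Fintype.equivFinOfCardEq hcard' with hg
  set E : Fin n → EdgeT (2 * n) := fun i => (g.symm i : EdgeT (2 * n)) with hE
  have hEmem : ∀ i, E i ∈ Mset := fun i => (g.symm i).2
  have hEcard : ∀ i : Fin n, (E i).1.card ≤ 2 := fun i => le_of_eq (E i).2
  set y : Fin n × Cfg (2 * n) → ℝ :=
    fun q => if q.2.1 = (E q.1).1 then 1 else 0 with hy
  have h01 : ∀ q, y q = 0 ∨ y q = 1 := by
    intro q; rw [hy]; dsimp only; split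
    · right; rfl
    · left; rfl
  refine ⟨y, ⟨h01, ?_, ?_⟩, ?_⟩
  · -- job constraint
    intro j
    have inner : ∀ i : Fin n, ∑ C : Cfg (2 * n), (if j ∈ C.1 then y (i, C) else 0)
        = if j ∈ (E i).1 then (1 : ℝ) else 0 := by
      intro i
      have swap : ∀ C : Cfg (2 * n),
          (if j ∈ C.1 then y (i, C) else 0)
            = (if C.1 = (E i).1 then (if j ∈ C.1 then (1 : ℝ) else 0) else 0) := by
        intro C
        rw [hy]; dsimp only
        by_cases h1 : j ∈ C.1 <;> by_cases h2 : C.1 = (E i).1 <;> simp [h1, h2]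
      rw [Finset.sum_congr rfl fun C _ => swap C,
        sum_config (E i).1 (hEcard i) (fun C => if j ∈ C.1 then (1 : ℝ) else 0)]
      rfl
    rw [Finset.sum_congr rfl fun i _ => inner i, Finset.sum_boole]
    have hbij : (Finset.univ.filter fun i : Fin n => j ∈ (E i).1).card
        = (Mset.filter (fun e => j ∈ e.1)).card := by
      refine Finset.card_bij (fun i _ => E i) ?_ ?_ ?_
      · intro i hi
        rw [Finset.mem_filter]
        exact ⟨hEmem i, (Finset.mem_filter.1 hi).2⟩
      · intro i₁ _ i₂ _ h
        have : g.symm i₁ = g.symm i₂ := Subtype.ext h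
        exact g.symm.injective this
      · intro e he
        rw [Finset.mem_filter] at he
        refine ⟨g ⟨e, he.1⟩, ?_, ?_⟩
        · rw [Finset.mem_filter]
          refine ⟨Finset.mem_univ _, ?_⟩
          have hEe : E (g ⟨e, he.1⟩) = e :=
            congrArg Subtype.val (g.symm_apply_apply ⟨e, he.1⟩)
          rw [hEe]
          exact he.2
        · exact congrArg Subtype.val (g.symm_apply_apply ⟨e, he.1⟩)
    rw [hbij, hdeg j]
    norm_num
  · -- machine constraint
    intro i
    have : ∀ C : Cfg (2 * n), y (i, C) = if C.1 = (E i).1 then (1 : ℝ) else 0 := by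
      intro C; rw [hy]
    rw [Finset.sum_congr rfl fun C _ => this C,
      sum_config (E i).1 (hEcard i) (fun _ => (1 : ℝ))]
  · -- projection equals the indicator of the matching
    funext e
    have hecard : e.1.card ≤ 2 := le_of_eq e.2
    have inner : ∀ i : Fin n, ∑ C : Cfg (2 * n), (if C.1 = e.1 then y (i, C) else 0)
        = if e.1 = (E i).1 then (1 : ℝ) else 0 := by
      intro i
      rw [sum_config e.1 hecard (fun C => y (i, C))]
      rfl
    rw [Finset.sum_congr rfl fun i _ => inner i]
    by_cases he : e ∈ Mset
    · rw [if_pos he]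
      rw [Finset.sum_eq_single (g ⟨e, he⟩)]
      · have hEe : E (g ⟨e, he⟩) = e :=
          congrArg Subtype.val (g.symm_apply_apply ⟨e, he⟩)
        rw [hEe, if_pos rfl]
      · intro i _ hne
        rw [if_neg]
        intro h
        apply hne
        have h1 : (⟨e, he⟩ : {e // e ∈ Mset}) = g.symm i := Subtype.ext (Subtype.ext h)
        rw [h1, Equiv.apply_symm_apply]
      · intro h; exact absurd (Finset.mem_univ _) h
    · rw [if_neg he]
      refine Finset.sum_eq_zero fun i _ => ?_
      rw [if_neg]
      intro h
      exact he (by rw [Subtype.ext h]; exact hEmem i)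

/-- For `n` machines, `2n` unit jobs and `T = 2`, the linear map
`f_{\{u,v\}}(y) = ∑_i y_{i,\{u,v\}}` maps `P_config(J,M,2)` onto the perfect matching
polytope of `K_{2n}`; that is, `P_config(J,M,2)` is an extended formulation of the
perfect matching polytope. -/
theorem Pconfig_projects_to_perfect_matching (n : ℕ) (hn : 1 ≤ n) :
    (fun (y : Fin n × Config (2 * n) (fun _ => 1) 2 → ℝ) (e : EdgeT (2 * n)) =>
        ∑ i : Fin n, ∑ C : Config (2 * n) (fun _ => 1) 2,
          (if C.1 = e.1 then y (i, C) else 0)) ''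
      Pconfig n (2 * n) (fun _ => 1) 2 = PMpoly (2 * n) := by
  classical
  have hlin : IsLinearMap ℝ (fun (y : Fin n × Config (2 * n) (fun _ => 1) 2 → ℝ)
      (e : EdgeT (2 * n)) => ∑ i : Fin n, ∑ C : Config (2 * n) (fun _ => 1) 2,
        (if C.1 = e.1 then y (i, C) else 0)) := by
    constructor
    · intro a b
      funext e
      dsimp only [Pi.add_apply]
      rw [← Finset.sum_add_distrib]
      refine Finset.sum_congr rfl fun i _ => ?_
      rw [← Finset.sum_add_distrib]
      refine Finset.sum_congr rfl fun C _ => ?_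
      split <;> simp
    · intro c a
      funext e
      dsimp only [Pi.smul_apply, smul_eq_mul]
      rw [Finset.mul_sum]
      refine Finset.sum_congr rfl fun i _ => ?_
      rw [Finset.mul_sum]
      refine Finset.sum_congr rfl fun C _ => ?_
      split <;> simp
  rw [Pconfig, PMpoly, hlin.image_convexHull]
  congr 1
  ext x
  simp only [Set.mem_image, Set.mem_setOf_eq]
  constructor
  · rintro ⟨y, ⟨h01, hjob, hmach⟩, rfl⟩
    obtain ⟨Mset, h1, h2⟩ := pconfig_vertex_projects n y h01 hjob hmach
    exact ⟨Mset, h1, h2⟩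
  · rintro ⟨Mset, hdeg, rfl⟩
    obtain ⟨y, hy, hFy⟩ := matching_lifts n Mset hdeg
    exact ⟨y, hy, hFy⟩
end
end

section
/- There exists a function h : ℕ → ℕ such that the following holds for every T ∈ ℕ, every m ∈ ℕ, and every tuple of nonnegative integers (n_p)_{p∈{1,…,T}}. Let P_* be the convex hull of all vectors z ∈ ℕ^{𝒞_*(T)} satisfying ∑_{C∈𝒞_*(T)} z_C = m and ∑_{C∈𝒞_*(T)} m(p,C)·z_C = n_p for every p ∈ {1,…,T}. Then P_* has at most h(T) extreme points. In particular, the number of extreme points is bounded independently of m and of the values n_p. -/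
open Finset

noncomputable section

/-- A pattern (abstract configuration) for target makespan `T`: the multiplicity
`c q : ℕ` (bounded by `T`) of each processing time `q+1 ∈ {1, …, T}`, with total size
`∑ (q+1)·(c q) ≤ T`. -/
abbrev Pattern (T : ℕ) :=
  {c : Fin T → Fin (T + 1) // ∑ q : Fin T, ((q : ℕ) + 1) * (c q : ℕ) ≤ T}

/-- `P_*(J,M,T)`: the convex hull of all nonnegative-integer vectors `z` (indexed by
patterns) with `∑_C z_C = m` and `∑_C m(p,C)·z_C = n_p` for every processing time `p`. -/
def Pstar (T m : ℕ) (np : Fin T → ℕ) : Set (Pattern T → ℝ) :=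
  convexHull ℝ {z | ∃ w : Pattern T → ℕ,
    (∑ C : Pattern T, w C = m) ∧
    (∀ q : Fin T, ∑ C : Pattern T, (C.1 q : ℕ) * w C = np q) ∧
    z = fun C => (w C : ℝ)}

namespace PstarAux

variable {T : ℕ}

/-- Integer kernel of the constraint matrix. -/
def IsKer (T : ℕ) (v : Pattern T → ℤ) : Prop :=
  (∑ C : Pattern T, v C = 0) ∧ ∀ q : Fin T, ∑ C : Pattern T, (C.1 q : ℤ) * v C = 0

/-- A bound on the norm of some nonzero kernel vector supported in `s` (when one exists). -/
def KS (T : ℕ) (s : Finset (Pattern T)) : ℕ :=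
  sInf {k | ∃ v : Pattern T → ℤ, v ≠ 0 ∧ IsKer T v ∧ (∀ C, v C ≠ 0 → C ∈ s) ∧
    ∀ C, (v C).natAbs ≤ k}

/-- The key constant depending only on `T`. -/
def K (T : ℕ) : ℕ := Finset.univ.sup (KS T)

lemma exists_small_ker {v : Pattern T → ℤ} (hv : v ≠ 0) (hker : IsKer T v) :
    ∃ w : Pattern T → ℤ, w ≠ 0 ∧ IsKer T w ∧ (∀ C, w C ≠ 0 → v C ≠ 0) ∧
      ∀ C, (w C).natAbs ≤ K T := by
  classical
  set s : Finset (Pattern T) := Finset.univ.filter (fun C => v C ≠ 0) with hs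
  have hne : (Finset.univ.sup fun C => (v C).natAbs) ∈
      {k | ∃ v' : Pattern T → ℤ, v' ≠ 0 ∧ IsKer T v' ∧ (∀ C, v' C ≠ 0 → C ∈ s) ∧
        ∀ C, (v' C).natAbs ≤ k} :=
    ⟨v, hv, hker, fun C hC => by simp [hs, hC],
      fun C => Finset.le_sup (f := fun C => (v C).natAbs) (mem_univ C)⟩
  have hmem : KS T s ∈ {k | ∃ v' : Pattern T → ℤ, v' ≠ 0 ∧ IsKer T v' ∧
      (∀ C, v' C ≠ 0 → C ∈ s) ∧ ∀ C, (v' C).natAbs ≤ k} := Nat.sInf_mem ⟨_, hne⟩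
  obtain ⟨w, hw0, hwker, hwsupp, hwb⟩ := hmem
  refine ⟨w, hw0, hwker, fun C hC => ?_, fun C => le_trans (hwb C)
    (Finset.le_sup (mem_univ s))⟩
  have := hwsupp C hC
  simpa [hs] using this

/-- The set whose convex hull is `Pstar`. -/
def baseSet (T m : ℕ) (np : Fin T → ℕ) : Set (Pattern T → ℝ) :=
  {z | ∃ w : Pattern T → ℕ,
    (∑ C : Pattern T, w C = m) ∧
    (∀ q : Fin T, ∑ C : Pattern T, (C.1 q : ℕ) * w C = np q) ∧
    z = fun C => (w C : ℝ)}

lemma extreme_mem_base {m : ℕ} {np : Fin T → ℕ} {z : Pattern T → ℝ}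
    (hz : z ∈ Set.extremePoints ℝ (Pstar T m np)) : z ∈ baseSet T m np :=
  extremePoints_convexHull_subset hz

/-- Key structural lemma: two extreme points that agree after capping all
coordinates at `K T` are equal. -/
lemma cap_inj {m : ℕ} {np : Fin T → ℕ} {x x' : Pattern T → ℕ}
    (hx : (fun C => ((x C : ℕ) : ℝ)) ∈ Set.extremePoints ℝ (Pstar T m np))
    (hx' : (fun C => ((x' C : ℕ) : ℝ)) ∈ Set.extremePoints ℝ (Pstar T m np))
    (hcap : ∀ C, min (x C) (K T) = min (x' C) (K T)) : x = x' := by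
  classical
  by_contra hne
  -- x and x' satisfy the integer constraints
  obtain ⟨wx, hxs, hxq, hxe⟩ := extreme_mem_base hx
  obtain ⟨wx', hxs', hxq', hxe'⟩ := extreme_mem_base hx'
  have hwx : wx = x := by
    funext C
    have := congrFun hxe C
    exact_mod_cast this.symm
  have hwx' : wx' = x' := by
    funext C
    have := congrFun hxe' C
    exact_mod_cast this.symm
  rw [hwx] at hxs hxq
  rw [hwx'] at hxs' hxq'
  -- the difference is a nonzero kernel vector
  set v : Pattern T → ℤ := fun C => (x C : ℤ) - (x' C : ℤ) with hv
  have hv0 : v ≠ 0 := by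
    intro h
    apply hne
    funext C
    have := congrFun h C
    simp [hv] at this
    omega
  have hvker : IsKer T v := by
    constructor
    · simp only [hv, Finset.sum_sub_distrib]
      have h1 : ∑ C : Pattern T, ((x C : ℤ)) = (m : ℤ) := by exact_mod_cast hxs
      have h2 : ∑ C : Pattern T, ((x' C : ℤ)) = (m : ℤ) := by exact_mod_cast hxs'
      rw [h1, h2]; ring
    · intro q
      simp only [hv, mul_sub, Finset.sum_sub_distrib]
      have h1 : ∑ C : Pattern T, ((C.1 q : ℤ)) * (x C : ℤ) = (np q : ℤ) := by
        exact_mod_cast hxq q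
      have h2 : ∑ C : Pattern T, ((C.1 q : ℤ)) * (x' C : ℤ) = (np q : ℤ) := by
        exact_mod_cast hxq' q
      rw [h1, h2]; ring
  obtain ⟨w, hw0, hwker, hwsupp, hwb⟩ := exists_small_ker hv0 hvker
  -- on the support of w, both x and x' are at least K T
  have hbig : ∀ C, w C ≠ 0 → K T ≤ x C ∧ K T ≤ x' C := by
    intro C hC
    have hvC : v C ≠ 0 := hwsupp C hC
    have hxx : x C ≠ x' C := by
      intro h; apply hvC; simp [hv, h]
    have := hcap C
    rcases le_or_gt (K T) (x C) with h1 | h1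
    · rcases le_or_gt (K T) (x' C) with h2 | h2
      · exact ⟨h1, h2⟩
      · exfalso; rw [min_eq_right h1, min_eq_left (le_of_lt h2)] at this; omega
    · exfalso
      rcases le_or_gt (K T) (x' C) with h2 | h2
      · rw [min_eq_left (le_of_lt h1), min_eq_right h2] at this; omega
      · rw [min_eq_left (le_of_lt h1), min_eq_left (le_of_lt h2)] at this; omega
  -- split w into positive and negative parts
  set y : Pattern T → ℕ := fun C => (w C).toNat with hy
  set y' : Pattern T → ℕ := fun C => (-(w C)).toNat with hy'
  have hyx : ∀ C, y C ≤ x C := by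
    intro C
    by_cases hC : w C = 0
    · simp [hy, hC]
    · have h1 := (hbig C hC).1
      have : (w C).toNat ≤ (w C).natAbs := by omega
      exact le_trans this (le_trans (hwb C) h1)
  have hyx' : ∀ C, y' C ≤ x C := by
    intro C
    by_cases hC : w C = 0
    · simp [hy', hC]
    · have h1 := (hbig C hC).1
      have : (-(w C)).toNat ≤ (w C).natAbs := by omega
      exact le_trans this (le_trans (hwb C) h1)
  have hwyy : ∀ C, (w C) = (y C : ℤ) - (y' C : ℤ) := by
    intro C; simp only [hy, hy']; omega
  -- equal sums for y and y'
  have hys : ∑ C : Pattern T, (y C : ℤ) = ∑ C : Pattern T, (y' C : ℤ) := by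
    have := hwker.1
    simp only [hwyy, Finset.sum_sub_distrib] at this
    omega
  have hyq : ∀ q : Fin T, ∑ C : Pattern T, ((C.1 q : ℤ)) * (y C : ℤ)
      = ∑ C : Pattern T, ((C.1 q : ℤ)) * (y' C : ℤ) := by
    intro q
    have := hwker.2 q
    simp only [hwyy, mul_sub, Finset.sum_sub_distrib] at this
    omega
  -- the two exchanged points
  set u : Pattern T → ℕ := fun C => x C - y C + y' C with hu
  set u' : Pattern T → ℕ := fun C => x C - y' C + y C with hu'
  have huz : ∀ C, (u C : ℤ) = (x C : ℤ) - (y C : ℤ) + (y' C : ℤ) := by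
    intro C; have := hyx C; simp [hu]; omega
  have huz' : ∀ C, (u' C : ℤ) = (x C : ℤ) - (y' C : ℤ) + (y C : ℤ) := by
    intro C; have := hyx' C; simp [hu']; omega
  have hxZ : ∑ C : Pattern T, ((x C : ℤ)) = (m : ℤ) := by exact_mod_cast hxs
  have hxqZ : ∀ q : Fin T, ∑ C : Pattern T, ((C.1 q : ℤ)) * (x C : ℤ) = (np q : ℤ) := by
    intro q; exact_mod_cast hxq q
  have humem : (fun C => ((u C : ℕ) : ℝ)) ∈ baseSet T m np := by
    refine ⟨u, ?_, ?_, rfl⟩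
    · have : ∑ C : Pattern T, (u C : ℤ) = (m : ℤ) := by
        simp only [huz, Finset.sum_add_distrib, Finset.sum_sub_distrib]
        omega
      exact_mod_cast this
    · intro q
      have : ∑ C : Pattern T, ((C.1 q : ℤ)) * (u C : ℤ) = (np q : ℤ) := by
        have h := hyq q
        calc ∑ C : Pattern T, ((C.1 q : ℤ)) * (u C : ℤ)
            = ∑ C : Pattern T, (((C.1 q : ℤ)) * (x C : ℤ) - ((C.1 q : ℤ)) * (y C : ℤ)
              + ((C.1 q : ℤ)) * (y' C : ℤ)) := by
              refine Finset.sum_congr rfl fun C _ => ?_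
              rw [huz C]; ring
          _ = (np q : ℤ) := by
              simp only [Finset.sum_add_distrib, Finset.sum_sub_distrib]
              rw [hxqZ q, h]; ring
      exact_mod_cast this
  have humem' : (fun C => ((u' C : ℕ) : ℝ)) ∈ baseSet T m np := by
    refine ⟨u', ?_, ?_, rfl⟩
    · have : ∑ C : Pattern T, (u' C : ℤ) = (m : ℤ) := by
        simp only [huz', Finset.sum_add_distrib, Finset.sum_sub_distrib]
        omega
      exact_mod_cast this
    · intro q
      have : ∑ C : Pattern T, ((C.1 q : ℤ)) * (u' C : ℤ) = (np q : ℤ) := by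
        have h := hyq q
        calc ∑ C : Pattern T, ((C.1 q : ℤ)) * (u' C : ℤ)
            = ∑ C : Pattern T, (((C.1 q : ℤ)) * (x C : ℤ) - ((C.1 q : ℤ)) * (y' C : ℤ)
              + ((C.1 q : ℤ)) * (y C : ℤ)) := by
              refine Finset.sum_congr rfl fun C _ => ?_
              rw [huz' C]; ring
          _ = (np q : ℤ) := by
              simp only [Finset.sum_add_distrib, Finset.sum_sub_distrib]
              rw [hxqZ q, h]; ring
      exact_mod_cast this
  have hsub : baseSet T m np ⊆ Pstar T m np := subset_convexHull ℝ _
  -- x is the midpoint of u and u'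
  have hseg : (fun C => ((x C : ℕ) : ℝ)) ∈
      openSegment ℝ (fun C => ((u C : ℕ) : ℝ)) (fun C => ((u' C : ℕ) : ℝ)) := by
    refine ⟨1/2, 1/2, by norm_num, by norm_num, by norm_num, ?_⟩
    funext C
    have h1 : ((u C : ℕ) : ℝ) = ((x C : ℕ) : ℝ) - ((y C : ℕ) : ℝ) + ((y' C : ℕ) : ℝ) := by
      exact_mod_cast congrArg (Int.cast : ℤ → ℝ) (huz C)
    have h2 : ((u' C : ℕ) : ℝ) = ((x C : ℕ) : ℝ) - ((y' C : ℕ) : ℝ) + ((y C : ℕ) : ℝ) := by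
      exact_mod_cast congrArg (Int.cast : ℤ → ℝ) (huz' C)
    simp only [Pi.add_apply, Pi.smul_apply, smul_eq_mul, h1, h2]
    ring
  have := hx.2 (hsub humem) (hsub humem') hseg
  have hux : u = x := by
    funext C
    have h := congrFun this C
    exact_mod_cast h
  -- from u = x deduce y = y', hence w = 0
  apply hw0
  funext C
  have h := congrFun hux C
  have h1 := hyx C
  have h2 : x C - y C + y' C = x C := h
  have : y C = y' C := by omega
  rw [hwyy C, this]
  simp

end PstarAux

/-- The number of extreme points of `P_*` is bounded by a function of `T` alone,
independently of the number of machines `m` and of the job multiplicities `n_p`. -/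
theorem Pstar_few_extreme_points :
    ∃ h : ℕ → ℕ, ∀ (T m : ℕ) (np : Fin T → ℕ),
      (Set.extremePoints ℝ (Pstar T m np)).Finite ∧
      (Set.extremePoints ℝ (Pstar T m np)).ncard ≤ h T := by
  classical
  refine ⟨fun T => (PstarAux.K T + 1) ^ (Fintype.card (Pattern T)), fun T m np => ?_⟩
  set E := Set.extremePoints ℝ (Pstar T m np) with hE
  set F : (Pattern T → ℝ) → (Pattern T → Fin (PstarAux.K T + 1)) :=
    fun z C => ⟨min (⌊z C⌋₊) (PstarAux.K T), Nat.lt_succ_of_le (min_le_right _ _)⟩ with hF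
  have hinj : Set.InjOn F E := by
    intro z hz z' hz' hzz
    obtain ⟨x, _, _, hxe⟩ := PstarAux.extreme_mem_base hz
    obtain ⟨x', _, _, hxe'⟩ := PstarAux.extreme_mem_base hz'
    subst hxe hxe'
    have hcap : ∀ C, min (x C) (PstarAux.K T) = min (x' C) (PstarAux.K T) := by
      intro C
      have h := congrFun hzz C
      have h1 : ⌊((x C : ℕ) : ℝ)⌋₊ = x C := Nat.floor_natCast _
      have h2 : ⌊((x' C : ℕ) : ℝ)⌋₊ = x' C := Nat.floor_natCast _
      simpa [hF, h1, h2, Fin.ext_iff] using h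
    have := PstarAux.cap_inj hz hz' hcap
    rw [this]
  have hfin : E.Finite := Set.Finite.of_finite_image (Set.toFinite _) hinj
  refine ⟨hfin, ?_⟩
  calc E.ncard = (F '' E).ncard := (Set.ncard_image_of_injOn hinj).symm
    _ ≤ (Set.univ : Set (Pattern T → Fin (PstarAux.K T + 1))).ncard :=
        Set.ncard_le_ncard (Set.subset_univ _) Set.finite_univ
    _ = (PstarAux.K T + 1) ^ (Fintype.card (Pattern T)) := by
        rw [Set.ncard_univ, Nat.card_eq_fintype_card, Fintype.card_fun, Fintype.card_fin]
end
end
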